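/- arXiv:1411.1391 — 7 statements merged into one kernel-verified Lean document; each statement's English description precedes it below -/
import Mathlib

section
/- If Γ is a bounded monoid, then ι(E) generates Ê as an R-module; that is, the R-submodule of Ê generated by the image of the splitting ι : E → Ê equals Ê. -/
noncomputable section

/-- `α ≺ β` iff `α + γ = β` for some `γ ≠ 0` in the abelian monoid `Γ`. -/
def Prec {Γ : Type*} [AddCommMonoid Γ] (α β : Γ) : Prop :=
  ∃ γ : Γ, γ ≠ 0 ∧ α + γ = β

/-- `Γ` is bounded: there is `ℓ : Γ → ℕ` bounding the length of every `≺`-chain below any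
element. -/
def BoundedMonoid (Γ : Type*) [AddCommMonoid Γ] : Prop :=
  ∃ ℓ : Γ → ℕ, ∀ (s : ℕ) (c : ℕ → Γ), (∀ i < s, Prec (c (i + 1)) (c i)) → s ≤ ℓ (c 0)

/-!
Because `Γ` is bounded, `≺` is well founded, so one can argue by induction on the degree. A
homogeneous `m ∈ Ê_γ` differs from `ι(π m) ∈ Ê_γ` by an element of `R₊·Ê`, and the degree-`γ`
component of any `r • m'` with `r ∈ R_{γ'}`, `γ' ≠ 0`, only involves components of `m'` of
degrees `δ` with `δ + γ' = γ`, that is `δ ≺ γ`, which lie in the span of `ι(E)` by induction.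
-/

theorem wellFounded_of_chain_length_le {α : Type*} {r : α → α → Prop} (ℓ : α → ℕ)
    (h : ∀ (s : ℕ) (c : ℕ → α), (∀ i < s, r (c (i + 1)) (c i)) → s ≤ ℓ (c 0)) :
    WellFounded r :=
  wellFounded_iff_isEmpty_descending_chain.mpr
    ⟨fun ⟨c, hc⟩ ↦ (h (ℓ (c 0) + 1) c fun i _ ↦ hc i).not_gt (Nat.lt_succ_self _)⟩

theorem BoundedMonoid.wellFounded_prec {Γ : Type*} [AddCommMonoid Γ] (h : BoundedMonoid Γ) :
    WellFounded (Prec : Γ → Γ → Prop) :=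
  let ⟨ℓ, hℓ⟩ := h
  wellFounded_of_chain_length_le ℓ hℓ

/-- The submodule `R₊ · M`. -/
def positiveSmulSpan {Γ R₀ R : Type*} [AddCommMonoid Γ] [CommSemiring R₀] [Semiring R]
    [Module R₀ R] (𝒜 : Γ → Submodule R₀ R) (M : Type*) [AddCommMonoid M] [Module R₀ M]
    [SMul R M] : Submodule R₀ M :=
  Submodule.span R₀ {z : M | ∃ γ : Γ, γ ≠ 0 ∧ ∃ r ∈ 𝒜 γ, ∃ m : M, z = r • m}

section GradedNakayama

open DirectSum

variable {Γ : Type*} [AddCommMonoid Γ] [DecidableEq Γ]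
  {R₀ R M : Type*} [CommRing R₀] [Ring R] [Algebra R₀ R]
  [AddCommGroup M] [Module R₀ M] [Module R M] [IsScalarTower R₀ R M]
  (𝒜 : Γ → Submodule R₀ R) (ℰ : Γ → Submodule R₀ M)

variable [Decomposition ℰ]

theorem decompose_mem_of_mem_positiveSmulSpan
    (hsmul : ∀ (γ γ' : Γ) (r : R) (m : M), r ∈ 𝒜 γ → m ∈ ℰ γ' → r • m ∈ ℰ (γ + γ'))
    (S : Submodule R M) {γ : Γ}
    (hlow : ∀ δ, Prec δ γ → ∀ m ∈ ℰ δ, m ∈ S) {z : M} (hz : z ∈ positiveSmulSpan 𝒜 M) :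
    (decompose ℰ z γ : M) ∈ S := by
  induction hz using Submodule.span_induction with
  | mem z hz =>
    obtain ⟨γ', hγ', r, hr, m, rfl⟩ := hz
    induction m using Decomposition.inductionOn ℰ with
    | zero => simp
    | add m m' hm hm' =>
      simpa only [smul_add, decompose_add, DirectSum.add_apply, Submodule.coe_add] using
        S.add_mem hm hm'
    | @homogeneous δ m =>
      have hrm := hsmul γ' δ r m hr m.2
      by_cases hdeg : γ' + δ = γ
      · rw [decompose_of_mem_same ℰ (hdeg ▸ hrm)]
        exact S.smul_mem r (hlow δ ⟨γ', hγ', by rw [add_comm, hdeg]⟩ m m.2)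
      · rw [decompose_of_mem_ne ℰ hrm hdeg]
        exact S.zero_mem
  | zero => simp
  | add x y _ _ hx hy =>
    simpa only [decompose_add, DirectSum.add_apply, Submodule.coe_add] using S.add_mem hx hy
  | smul a x _ hx =>
    simpa only [decompose_smul, DirectSum.smul_apply, Submodule.coe_smul, algebraMap_smul] using
      S.smul_mem (algebraMap R₀ R a) hx

theorem Submodule.eq_top_of_forall_exists_sub_mem_positiveSmulSpan
    (hsmul : ∀ (γ γ' : Γ) (r : R) (m : M), r ∈ 𝒜 γ → m ∈ ℰ γ' → r • m ∈ ℰ (γ + γ'))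
    (hwf : WellFounded (Prec : Γ → Γ → Prop)) (S : Submodule R M)
    (hlift : ∀ γ, ∀ m ∈ ℰ γ, ∃ x ∈ S, x ∈ ℰ γ ∧ m - x ∈ positiveSmulSpan 𝒜 M) :
    S = ⊤ := by
  have homogeneous_mem : ∀ γ, ∀ m ∈ ℰ γ, m ∈ S := by
    intro γ
    induction γ using hwf.induction with
    | _ γ ih =>
      intro m hm
      obtain ⟨x, hxS, hx, hmx⟩ := hlift γ m hm
      have hmxS := decompose_mem_of_mem_positiveSmulSpan 𝒜 ℰ hsmul S ih hmx
      rw [decompose_of_mem_same ℰ (sub_mem hm hx)] at hmxS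
      simpa using S.add_mem hmxS hxS
  refine eq_top_iff'.mpr fun m ↦ ?_
  induction m using Decomposition.inductionOn ℰ with
  | zero => exact S.zero_mem
  | homogeneous m => exact homogeneous_mem _ m m.2
  | add m m' hm hm' => exact S.add_mem hm hm'

end GradedNakayama

theorem statement2_general
    {Γ : Type*} [AddCommMonoid Γ] [DecidableEq Γ]
    {R : Type*} [Ring R] [Algebra (LaurentPolynomial ℤ) R]
    (𝒜 : Γ → Submodule (LaurentPolynomial ℤ) R)
    {M : Type*} [AddCommGroup M] [Module (LaurentPolynomial ℤ) M] [Module R M]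
    [IsScalarTower (LaurentPolynomial ℤ) R M]
    (ℰ : Γ → Submodule (LaurentPolynomial ℤ) M)
    (hMinternal : DirectSum.IsInternal ℰ)
    (hMsmul : ∀ (γ γ' : Γ) (r : R) (m : M), r ∈ 𝒜 γ → m ∈ ℰ γ' → r • m ∈ ℰ (γ + γ'))
    {E : Type*} [AddCommGroup E] [Module (LaurentPolynomial ℤ) E]
    (π : M →ₗ[LaurentPolynomial ℤ] E)
    (hπker : LinearMap.ker π = Submodule.span (LaurentPolynomial ℤ)
      {z : M | ∃ γ : Γ, γ ≠ 0 ∧ ∃ r ∈ 𝒜 γ, ∃ m : M, z = r • m})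
    (ι : E →ₗ[LaurentPolynomial ℤ] M) (hιπ : ∀ x : E, π (ι x) = x)
    (hιhom : ∀ (γ : Γ) (x : E), x ∈ (ℰ γ).map π → ι x ∈ ℰ γ)
    (hbounded : BoundedMonoid Γ) :
    Submodule.span R (Set.range ι) = ⊤ := by
  have := hMinternal.chooseDecomposition
  refine Submodule.eq_top_of_forall_exists_sub_mem_positiveSmulSpan 𝒜 ℰ hMsmul
    hbounded.wellFounded_prec _ fun γ m hm ↦
      ⟨ι (π m), Submodule.subset_span ⟨π m, rfl⟩, hιhom γ _ ⟨m, hm, rfl⟩, ?_⟩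
  rw [positiveSmulSpan, ← hπker, LinearMap.mem_ker, map_sub, hιπ, sub_self]

/-- if `Γ` is a bounded monoid then `ι(E)` generates `Ê` as an `R`-module.

Setting: `R₀ = ℤ[ν,ν⁻¹]`, `R` a `Γ`-graded unital ring with central degree-zero part `R₀`
(grading `𝒜`), `Ê = M` a `Γ`-graded left `R`-module (grading `ℰ`) with each graded piece
free over `R₀`, `E = Ê/(R₊·Ê)` free over `R₀` (presented via the projection `π` whose kernel
is `R₊·Ê`), and `ι` a homogeneous `R₀`-linear splitting of `π`. -/
theorem statement2
    {Γ : Type*} [AddCommMonoid Γ] [DecidableEq Γ]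
    {R : Type*} [Ring R] [Algebra (LaurentPolynomial ℤ) R]
    (𝒜 : Γ → Submodule (LaurentPolynomial ℤ) R)
    (hRinternal : DirectSum.IsInternal 𝒜)
    (hRzero : 𝒜 0 = LinearMap.range (Algebra.linearMap (LaurentPolynomial ℤ) R))
    (hRmul : ∀ (γ γ' : Γ) (x y : R), x ∈ 𝒜 γ → y ∈ 𝒜 γ' → x * y ∈ 𝒜 (γ + γ'))
    {M : Type*} [AddCommGroup M] [Module (LaurentPolynomial ℤ) M] [Module R M]
    [IsScalarTower (LaurentPolynomial ℤ) R M]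
    (ℰ : Γ → Submodule (LaurentPolynomial ℤ) M)
    (hMinternal : DirectSum.IsInternal ℰ)
    (hMfree : ∀ γ : Γ, Module.Free (LaurentPolynomial ℤ) (ℰ γ))
    (hMsmul : ∀ (γ γ' : Γ) (r : R) (m : M), r ∈ 𝒜 γ → m ∈ ℰ γ' → r • m ∈ ℰ (γ + γ'))
    {E : Type*} [AddCommGroup E] [Module (LaurentPolynomial ℤ) E]
    [Module.Free (LaurentPolynomial ℤ) E]
    (π : M →ₗ[LaurentPolynomial ℤ] E) (hπsurj : Function.Surjective π)
    (hπker : LinearMap.ker π = Submodule.span (LaurentPolynomial ℤ)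
      {z : M | ∃ γ : Γ, γ ≠ 0 ∧ ∃ r ∈ 𝒜 γ, ∃ m : M, z = r • m})
    (ι : E →ₗ[LaurentPolynomial ℤ] M) (hιπ : ∀ x : E, π (ι x) = x)
    (hιhom : ∀ (γ : Γ) (x : E), x ∈ (ℰ γ).map π → ι x ∈ ℰ γ)
    (hbounded : BoundedMonoid Γ) :
    Submodule.span R (Set.range ι) = ⊤ :=
  statement2_general 𝒜 ℰ hMinternal hMsmul π hπker ι hιπ hιhom hbounded
end
end

section
/- Let A be an associative unital k-algebra over k = ℚ(q) containing elements E, F, K₊ satisfying K₊E = q²EK₊, K₊F = q⁻²FK₊ and EF − FE = (q⁻¹−q)K₊. Then: (i) the element C₊ := FE − qK₊ commutes with each of E, F and K₊ (hence is central in the subalgebra they generate); and (ii) for every integer m ≥ 0, (FE − qK₊)^m = Σ_{j=0}^{m} (−1)^j q^j · binom[q²]{m}{j} · K₊^j F^{m−j} E^{m−j}. -/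
noncomputable section

/-- The Gaussian binomial coefficient `binom[v]{a}{n} = ∏_{t=1}^{n} (v^{a-n+t} - 1)/(v^t - 1)`,
evaluated at `v ∈ ℚ(q)`. -/
def gbinom (v : RatFunc ℚ) (a n : ℕ) : RatFunc ℚ :=
  ∏ t ∈ Finset.range n, (v ^ (a - n + t + 1) - 1) / (v ^ (t + 1) - 1)

open Finset

namespace S4
variable {A : Type*} [Ring A] [Algebra (RatFunc ℚ) A]
variable {q : RatFunc ℚ} {E F K : A}

variable {A : Type*} [Ring A] [Algebra (RatFunc ℚ) A]
variable {q : RatFunc ℚ} {E F K : A}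

variable {A : Type*} [Ring A] [Algebra (RatFunc ℚ) A]
variable {q : RatFunc ℚ} {E F K : A}

lemma smul_cancel {c : RatFunc ℚ} (hc : c ≠ 0) {x y : A} (h : c • x = c • y) : x = y := by
  have h2 := congrArg (c⁻¹ • ·) h
  simpa [smul_smul, inv_mul_cancel₀ hc] using h2

lemma pow_mul_pow (x : A) (n : ℕ) : x * x ^ n = x ^ (n+1) := (pow_succ' x n).symm

lemma EF' (hEF : E * F - F * E = (q⁻¹ - q) • K) :
    E * F = F * E + (q⁻¹ - q) • K := by
  have h := sub_eq_iff_eq_add.mp hEF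
  rw [h, add_comm]

lemma KEpow (hKE : K * E = (q ^ 2) • (E * K)) :
    ∀ a : ℕ, K * E ^ a = (q ^ (2*a)) • (E ^ a * K) := by
  intro a; induction a with
  | zero => simp
  | succ n ih =>
    calc K * E ^ (n+1) = (K * E ^ n) * E := by rw [mul_assoc, ← pow_succ]
      _ = (q ^ (2*n)) • (E ^ n * (K * E)) := by rw [ih, smul_mul_assoc, mul_assoc]
      _ = (q ^ (2*n) * q ^ 2) • (E ^ n * (E * K)) := by rw [hKE, mul_smul_comm, smul_smul]
      _ = (q ^ (2*(n+1))) • (E ^ (n+1) * K) := by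
            rw [← mul_assoc, ← pow_succ]; congr 1; ring

lemma KFpow (hq0 : q ≠ 0) (hKF : K * F = (q⁻¹ ^ 2) • (F * K)) :
    ∀ a : ℕ, (q ^ (2*a)) • (K * F ^ a) = F ^ a * K := by
  have hKF2 : (q ^ 2) • (K * F) = F * K := by
    rw [hKF, smul_smul, show q^2 * q⁻¹^2 = 1 by field_simp, one_smul]
  intro a; induction a with
  | zero => simp
  | succ n ih =>
    calc (q ^ (2*(n+1))) • (K * F ^ (n+1))
        = (q ^ 2) • (((q ^ (2*n)) • (K * F ^ n)) * F) := by
          rw [smul_mul_assoc, smul_smul, mul_assoc, ← pow_succ]; congr 1; ring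
      _ = (q ^ 2) • ((F ^ n * K) * F) := by rw [ih]
      _ = F ^ n * ((q ^ 2) • (K * F)) := by rw [mul_assoc, mul_smul_comm]
      _ = F ^ (n+1) * K := by rw [hKF2, ← mul_assoc, ← pow_succ]

lemma KFE (hq0 : q ≠ 0) (hKE : K * E = (q ^ 2) • (E * K))
    (hKF : K * F = (q⁻¹ ^ 2) • (F * K)) (a : ℕ) :
    K * (F ^ a * E ^ a) = (F ^ a * E ^ a) * K := by
  apply smul_cancel (pow_ne_zero (2*a) hq0)
  calc (q ^ (2*a)) • (K * (F ^ a * E ^ a)) = ((q ^ (2*a)) • (K * F ^ a)) * E ^ a := by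
        rw [smul_mul_assoc, mul_assoc]
    _ = F ^ a * (K * E ^ a) := by rw [KFpow hq0 hKF, mul_assoc]
    _ = (q ^ (2*a)) • (F ^ a * E ^ a * K) := by rw [KEpow hKE, mul_smul_comm, mul_assoc]

lemma EFpow (hq0 : q ≠ 0) (hKF : K * F = (q⁻¹ ^ 2) • (F * K))
    (hEF : E * F - F * E = (q⁻¹ - q) • K) :
    ∀ a : ℕ, E * F ^ (a+1) = F ^ (a+1) * E + ((q ^ (2*a+1))⁻¹ - q) • (F ^ a * K) := by
  intro a; induction a with
  | zero => simpa using EF' hEF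
  | succ n ih =>
    calc E * F ^ (n+1+1) = (E * F ^ (n+1)) * F := by rw [mul_assoc, ← pow_succ]
      _ = (F ^ (n+1) * E) * F + ((q ^ (2*n+1))⁻¹ - q) • ((F ^ n * K) * F) := by
            rw [ih, add_mul, smul_mul_assoc]
      _ = F ^ (n+1) * (E * F) + ((q ^ (2*n+1))⁻¹ - q) • (F ^ n * (K * F)) := by
            rw [mul_assoc, mul_assoc]
      _ = F ^ (n+1) * (F * E + (q⁻¹ - q) • K) +
            ((q ^ (2*n+1))⁻¹ - q) • (F ^ n * ((q⁻¹ ^ 2) • (F * K))) := by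
            rw [EF' hEF, hKF]
      _ = F ^ (n+1+1) * E + (q⁻¹ - q) • (F ^ (n+1) * K) +
            (((q ^ (2*n+1))⁻¹ - q) * q⁻¹ ^ 2) • (F ^ (n+1) * K) := by
            rw [mul_add, mul_smul_comm, mul_smul_comm, smul_smul,
              ← mul_assoc (F ^ (n+1)) F E, ← mul_assoc (F ^ n) F K, ← pow_succ, ← pow_succ]
      _ = F ^ (n+1+1) * E + ((q ^ (2*(n+1)+1))⁻¹ - q) • (F ^ (n+1) * K) := by
            have h1 : q ^ (2*n+1) ≠ 0 := pow_ne_zero _ hq0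
            have h2 : q ^ (2*(n+1)+1) ≠ 0 := pow_ne_zero _ hq0
            have hsc : (q⁻¹ - q) + ((q ^ (2*n+1))⁻¹ - q) * q⁻¹ ^ 2
                = (q ^ (2*(n+1)+1))⁻¹ - q := by field_simp; ring
            rw [add_assoc, ← add_smul, hsc]

lemma FEFE (hq0 : q ≠ 0) (hKE : K * E = (q ^ 2) • (E * K))
    (hKF : K * F = (q⁻¹ ^ 2) • (F * K))
    (hEF : E * F - F * E = (q⁻¹ - q) • K) :
    ∀ a : ℕ, (F * E) * (F ^ a * E ^ a)
      = F ^ (a+1) * E ^ (a+1) + (q - q ^ (2*a+1)) • (F ^ a * E ^ a * K) := by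
  intro a
  match a with
  | 0 => simp
  | b+1 =>
    calc (F * E) * (F ^ (b+1) * E ^ (b+1))
        = F * ((E * F ^ (b+1)) * E ^ (b+1)) := by rw [mul_assoc, ← mul_assoc E]
      _ = F * ((F ^ (b+1) * E + ((q ^ (2*b+1))⁻¹ - q) • (F ^ b * K)) * E ^ (b+1)) := by
            rw [EFpow hq0 hKF hEF]
      _ = F * ((F ^ (b+1) * E) * E ^ (b+1)) +
            ((q ^ (2*b+1))⁻¹ - q) • (F * ((F ^ b * K) * E ^ (b+1))) := by
            rw [add_mul, smul_mul_assoc, mul_add, mul_smul_comm]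
      _ = (F * F ^ (b+1)) * (E * E ^ (b+1)) +
            ((q ^ (2*b+1))⁻¹ - q) • ((F * F ^ b) * (K * E ^ (b+1))) := by
            rw [mul_assoc (F ^ (b+1)) E, ← mul_assoc F (F ^ (b+1)),
              mul_assoc (F ^ b) K, ← mul_assoc F (F ^ b)]
      _ = F ^ (b+1+1) * E ^ (b+1+1) +
            ((q ^ (2*b+1))⁻¹ - q) • (F ^ (b+1) * (K * E ^ (b+1))) := by
            rw [pow_mul_pow F (b+1), pow_mul_pow E (b+1), pow_mul_pow F b]
      _ = F ^ (b+1+1) * E ^ (b+1+1) +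
            (((q ^ (2*b+1))⁻¹ - q) * q ^ (2*(b+1))) • (F ^ (b+1) * E ^ (b+1) * K) := by
            rw [KEpow hKE (b+1), mul_smul_comm, smul_smul, ← mul_assoc (F ^ (b+1))]
      _ = F ^ (b+1+1) * E ^ (b+1+1) +
            (q - q ^ (2*(b+1)+1)) • (F ^ (b+1) * E ^ (b+1) * K) := by
            have h1 : q ^ (2*b+1) ≠ 0 := pow_ne_zero _ hq0
            have hsc : ((q ^ (2*b+1))⁻¹ - q) * q ^ (2*(b+1)) = q - q ^ (2*(b+1)+1) := by
              field_simp; ring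
            rw [hsc]

lemma hCK (hq0 : q ≠ 0) (hKE : K * E = (q ^ 2) • (E * K))
    (hKF : K * F = (q⁻¹ ^ 2) • (F * K)) {C : A} (hC : C = F * E - q • K) :
    C * K = K * C := by
  have h1 := KFE hq0 hKE hKF 1
  simp only [pow_one] at h1
  calc C * K = (F * E) * K - q • (K * K) := by rw [hC, sub_mul, smul_mul_assoc]
    _ = K * C := by rw [← h1, hC, mul_sub, mul_smul_comm]

lemma hCE (hq0 : q ≠ 0) (hKE : K * E = (q ^ 2) • (E * K))
    (hEF : E * F - F * E = (q⁻¹ - q) • K) {C : A} (hC : C = F * E - q • K) :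
    C * E = E * C := by
  have hsc : (q⁻¹ - q) * q ^ 2 - q = -(q * q ^ 2) := by field_simp; ring
  calc C * E = F * E * E - (q * q ^ 2) • (E * K) := by
        rw [hC, sub_mul, smul_mul_assoc, hKE, smul_smul]
    _ = E * C := by
        rw [hC, mul_sub, mul_smul_comm, ← mul_assoc, EF' hEF, add_mul, smul_mul_assoc,
          hKE, smul_smul, add_sub_assoc, ← sub_smul, hsc, neg_smul, ← sub_eq_add_neg]

lemma hCF (hq0 : q ≠ 0) (hKF : K * F = (q⁻¹ ^ 2) • (F * K))
    (hEF : E * F - F * E = (q⁻¹ - q) • K) {C : A} (hC : C = F * E - q • K) :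
    C * F = F * C := by
  have hsc : (q⁻¹ - q) - q * q⁻¹ ^ 2 = -q := by field_simp; ring
  calc C * F = F * (F * E) + ((q⁻¹ - q) - q * q⁻¹ ^ 2) • (F * K) := by
        rw [hC, sub_mul, smul_mul_assoc, hKF, smul_smul, mul_assoc F E F, EF' hEF,
          mul_add, mul_smul_comm, add_sub_assoc, ← sub_smul]
    _ = F * C := by
        rw [hC, mul_sub, mul_smul_comm, hsc, neg_smul, ← sub_eq_add_neg]

lemma keystep (hq0 : q ≠ 0) (hKE : K * E = (q ^ 2) • (E * K))
    (hKF : K * F = (q⁻¹ ^ 2) • (F * K))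
    (hEF : E * F - F * E = (q⁻¹ - q) • K) {C : A} (hC : C = F * E - q • K)
    (j a : ℕ) :
    C * (K ^ j * F ^ a * E ^ a)
      = K ^ j * F ^ (a+1) * E ^ (a+1) - (q ^ (2*a+1)) • (K ^ (j+1) * F ^ a * E ^ a) := by
  have hcomm : C * K ^ j = K ^ j * C :=
    (Commute.pow_right (hCK hq0 hKE hKF hC) j).eq
  have inner : C * (F ^ a * E ^ a)
      = F ^ (a+1) * E ^ (a+1) - (q ^ (2*a+1)) • (F ^ a * E ^ a * K) := by
    calc C * (F ^ a * E ^ a)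
        = (F * E) * (F ^ a * E ^ a) - q • (K * (F ^ a * E ^ a)) := by
          rw [hC, sub_mul, smul_mul_assoc]
      _ = F ^ (a+1) * E ^ (a+1) + (q - q ^ (2*a+1)) • (F ^ a * E ^ a * K)
            - q • (F ^ a * E ^ a * K) := by
          rw [FEFE hq0 hKE hKF hEF a, KFE hq0 hKE hKF a]
      _ = F ^ (a+1) * E ^ (a+1) - (q ^ (2*a+1)) • (F ^ a * E ^ a * K) := by
          rw [add_sub_assoc, ← sub_smul, show q - q ^ (2*a+1) - q = -(q ^ (2*a+1)) by ring,
            neg_smul, ← sub_eq_add_neg]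
  calc C * (K ^ j * F ^ a * E ^ a)
      = (C * K ^ j) * (F ^ a * E ^ a) := by rw [mul_assoc (K ^ j), ← mul_assoc C]
    _ = K ^ j * (C * (F ^ a * E ^ a)) := by rw [hcomm, mul_assoc]
    _ = K ^ j * (F ^ (a+1) * E ^ (a+1)) -
          (q ^ (2*a+1)) • (K ^ j * (F ^ a * E ^ a * K)) := by
        rw [inner, mul_sub, mul_smul_comm]
    _ = K ^ j * F ^ (a+1) * E ^ (a+1) -
          (q ^ (2*a+1)) • (K ^ (j+1) * F ^ a * E ^ a) := by
        rw [← mul_assoc (K ^ j) (F ^ (a+1)) (E ^ (a+1)), ← KFE hq0 hKE hKF a,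
          ← mul_assoc (K ^ j) K, ← pow_succ, ← mul_assoc (K ^ (j+1))]

lemma X_pow_ne_one {n : ℕ} (hn : n ≠ 0) : (RatFunc.X : RatFunc ℚ) ^ n ≠ 1 := by
  intro h
  have h2 : (algebraMap (Polynomial ℚ) (RatFunc ℚ)) (Polynomial.X ^ n) =
      algebraMap (Polynomial ℚ) (RatFunc ℚ) 1 := by
    simpa [map_pow, RatFunc.algebraMap_X] using h
  have h3 := RatFunc.algebraMap_injective ℚ h2
  have := congrArg Polynomial.natDegree h3
  simp [Polynomial.natDegree_X_pow] at this
  exact hn this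

def gfact (v : RatFunc ℚ) (n : ℕ) : RatFunc ℚ := ∏ t ∈ Finset.range n, (v ^ (t+1) - 1)

lemma gfact_succ (v : RatFunc ℚ) (n : ℕ) : gfact v (n+1) = gfact v n * (v ^ (n+1) - 1) :=
  Finset.prod_range_succ _ _

variable {v : RatFunc ℚ} (hv : ∀ t : ℕ, t ≠ 0 → v ^ t ≠ 1)

include hv

lemma sub_one_ne_zero {t : ℕ} (ht : t ≠ 0) : v ^ t - 1 ≠ 0 :=
  sub_ne_zero.mpr (hv t ht)

lemma gfact_ne_zero (n : ℕ) : gfact v n ≠ 0 :=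
  Finset.prod_ne_zero_iff.mpr fun t _ => sub_one_ne_zero hv (by omega)

lemma gbinom_eq {a n : ℕ} (hn : n ≤ a) :
    gbinom v a n = gfact v a / (gfact v (a - n) * gfact v n) := by
  obtain ⟨b, rfl⟩ : ∃ b, a = b + n := ⟨a - n, by omega⟩
  rw [show b + n - n = b by omega]
  unfold gbinom gfact
  rw [Finset.prod_div_distrib, Finset.prod_range_add, Nat.add_sub_cancel]
  rw [mul_div_mul_left _ _ (Finset.prod_ne_zero_iff.mpr fun t _ => sub_one_ne_zero hv (by omega))]

omit hv in lemma gbinom_zero (a : ℕ) : gbinom v a 0 = 1 := by simp [gbinom]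

lemma gbinom_self (a : ℕ) : gbinom v a a = 1 := by
  unfold gbinom
  apply Finset.prod_eq_one
  intro t _
  rw [Nat.sub_self, Nat.zero_add]
  exact div_self (sub_one_ne_zero hv t.succ_ne_zero)

lemma gbinom_pascal {j m : ℕ} (h : j < m) :
    gbinom v (m+1) (j+1) = gbinom v m (j+1) + v ^ (m - j) * gbinom v m j := by
  obtain ⟨c, rfl⟩ : ∃ c, m = j + c + 1 := ⟨m - j - 1, by omega⟩
  rw [gbinom_eq hv (by omega), gbinom_eq hv (by omega), gbinom_eq hv (by omega)]
  rw [show j + c + 1 + 1 - (j + 1) = c + 1 by omega,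
      show j + c + 1 - (j + 1) = c by omega,
      show j + c + 1 - j = c + 1 by omega,
      show j + c + 1 + 1 = (j + c + 1) + 1 by omega]
  rw [gfact_succ, gfact_succ v c, gfact_succ v j, gfact_succ v (j+c)]
  have h1 := gfact_ne_zero hv c
  have h2 := gfact_ne_zero hv j
  have h3 := gfact_ne_zero hv (j + c)
  have h4 := sub_one_ne_zero hv (show c + 1 ≠ 0 by omega)
  have h5 := sub_one_ne_zero hv (show j + 1 ≠ 0 by omega)
  have h6 := sub_one_ne_zero hv (show j + c + 1 ≠ 0 by omega)
  field_simp
  ring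


end S4

/-- in any `ℚ(q)`-algebra with elements `E, F, K₊` satisfying the quantum
Heisenberg `sl₂` relations, the element `C₊ = FE - qK₊` is central in the subalgebra generated
by `E, F, K₊`, and its powers are given by the explicit Gaussian-binomial formula. -/
theorem statement4 {A : Type*} [Ring A] [Algebra (RatFunc ℚ) A]
    (q : RatFunc ℚ) (hq : q = RatFunc.X)
    (E F K : A)
    (hKE : K * E = (q ^ 2) • (E * K))
    (hKF : K * F = (q⁻¹ ^ 2) • (F * K))
    (hEF : E * F - F * E = (q⁻¹ - q) • K)
    (C : A) (hC : C = F * E - q • K) :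
    (C * E = E * C ∧ C * F = F * C ∧ C * K = K * C) ∧
      (∀ m : ℕ, C ^ m = ∑ j ∈ Finset.range (m + 1),
        (((-1 : RatFunc ℚ) ^ j * q ^ j * gbinom (q ^ 2) m j) •
          (K ^ j * F ^ (m - j) * E ^ (m - j)))) := by

  have hq0 : q ≠ 0 := by rw [hq]; exact RatFunc.X_ne_zero
  have hv : ∀ t : ℕ, t ≠ 0 → (q ^ 2) ^ t ≠ 1 := by
    intro t ht
    rw [hq, ← pow_mul]
    exact S4.X_pow_ne_one (by omega)
  refine ⟨⟨S4.hCE hq0 hKE hEF hC, S4.hCF hq0 hKF hEF hC, S4.hCK hq0 hKE hKF hC⟩, ?_⟩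
  intro m
  induction m with
  | zero => simp [gbinom]
  | succ m ih =>
    have step : ∀ j ∈ Finset.range (m+1),
        C * (((-1 : RatFunc ℚ) ^ j * q ^ j * gbinom (q ^ 2) m j) •
            (K ^ j * F ^ (m - j) * E ^ (m - j)))
          = ((-1 : RatFunc ℚ) ^ j * q ^ j * gbinom (q ^ 2) m j) •
              (K ^ j * F ^ (m + 1 - j) * E ^ (m + 1 - j))
            - ((-1 : RatFunc ℚ) ^ j * q ^ j * gbinom (q ^ 2) m j * q ^ (2*(m-j)+1)) •
              (K ^ (j+1) * F ^ (m - j) * E ^ (m - j)) := by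
      intro j hj
      have hjm : j ≤ m := by simpa [Nat.lt_succ_iff] using hj
      rw [mul_smul_comm, S4.keystep hq0 hKE hKF hEF hC j (m - j),
        show m - j + 1 = m + 1 - j by omega, smul_sub, smul_smul]
    rw [pow_succ', ih, Finset.mul_sum, Finset.sum_congr rfl step, Finset.sum_sub_distrib]
    conv_lhs => rw [Finset.sum_range_succ', Finset.sum_range_succ]
    conv_rhs => rw [Finset.sum_range_succ, Finset.sum_range_succ']
    rw [add_sub_add_comm, ← Finset.sum_sub_distrib]
    have emid : ∀ x ∈ Finset.range m,
        ((-1 : RatFunc ℚ) ^ (x + 1) * q ^ (x + 1) * gbinom (q ^ 2) m (x + 1)) •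
            (K ^ (x + 1) * F ^ (m + 1 - (x + 1)) * E ^ (m + 1 - (x + 1))) -
          ((-1 : RatFunc ℚ) ^ x * q ^ x * gbinom (q ^ 2) m x * q ^ (2 * (m - x) + 1)) •
            (K ^ (x + 1) * F ^ (m - x) * E ^ (m - x))
        = ((-1 : RatFunc ℚ) ^ (x + 1) * q ^ (x + 1) * gbinom (q ^ 2) (m + 1) (x + 1)) •
            (K ^ (x + 1) * F ^ (m + 1 - (x + 1)) * E ^ (m + 1 - (x + 1))) := by
      intro x hx
      have hxm : x < m := Finset.mem_range.mp hx
      rw [show m + 1 - (x + 1) = m - x by omega, ← sub_smul]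
      congr 1
      rw [S4.gbinom_pascal hv hxm]
      ring
    rw [Finset.sum_congr rfl emid]
    simp only [Nat.sub_self, Nat.sub_zero, pow_zero, one_mul, mul_one,
      S4.gbinom_zero, S4.gbinom_self hv]
    rw [show ((-1 : RatFunc ℚ) ^ (m + 1) * q ^ (m + 1))
        = -((-1 : RatFunc ℚ) ^ m * q ^ m * q ^ (2 * 0 + 1)) by ring, neg_smul]
    abel
end
end

section
/- Let A be an associative unital algebra over k = ℚ(q) containing elements E, F, K₊, K₋ satisfying the U_q(s̃l₂) relations, and let C⁽ᵐ⁾ be the Chebyshev-type central elements defined recursively from C = FE − qK₊ − q⁻¹K₋. Then for all integers a, b ≥ 0: C⁽ᵃ⁾ · C⁽ᵇ⁾ = Σ_{j=0}^{min(a,b)} (K₋K₊)^j · C⁽ᵃ⁺ᵇ⁻²ʲ⁾. -/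
noncomputable section

/-- The Chebyshev-type elements `C⁽⁰⁾ = 1`, `C⁽¹⁾ = C`,
`C⁽ᵐ⁺¹⁾ = C·C⁽ᵐ⁾ - K₊K₋·C⁽ᵐ⁻¹⁾` (for `m ≥ 1`), where `KK = K₊K₋`. -/
def cheb {A : Type*} [Ring A] (C KK : A) : ℕ → A
  | 0 => 1
  | 1 => C
  | n + 2 => C * cheb C KK (n + 1) - KK * cheb C KK n

theorem cheb_comm {A : Type*} [Ring A] {C KK : A} (h : Commute C KK) :
    ∀ n, Commute C (cheb C KK n) ∧ Commute KK (cheb C KK n)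
  | 0 => ⟨Commute.one_right C, Commute.one_right KK⟩
  | 1 => ⟨Commute.refl C, h.symm⟩
  | n + 2 => by
    obtain ⟨h1, h2⟩ := cheb_comm h (n + 1)
    obtain ⟨h3, h4⟩ := cheb_comm h n
    exact ⟨(((Commute.refl C).mul_right h1).sub_right (h.mul_right h3)),
      ((h.symm.mul_right h2).sub_right ((Commute.refl KK).mul_right h4))⟩

theorem cheb_commute {A : Type*} [Ring A] {C KK : A} (h : Commute C KK) :
    ∀ a b, Commute (cheb C KK a) (cheb C KK b)
  | 0, b => Commute.one_left _
  | 1, b => (cheb_comm h b).1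
  | a + 2, b =>
    (((cheb_comm h b).1).mul_left (cheb_commute h (a + 1) b)).sub_left
      (((cheb_comm h b).2).mul_left (cheb_commute h a b))

theorem cheb_C_mul {A : Type*} [Ring A] {C KK : A} (m : ℕ) :
    C * cheb C KK (m + 1) = cheb C KK (m + 2) + KK * cheb C KK m := by
  show C * cheb C KK (m + 1) =
    (C * cheb C KK (m + 1) - KK * cheb C KK m) + KK * cheb C KK m
  abel

theorem cheb_mul {A : Type*} [Ring A] {C KK : A} (h : Commute C KK) :
    ∀ b a, b ≤ a → cheb C KK a * cheb C KK b =
      ∑ j ∈ Finset.range (b + 1), KK ^ j * cheb C KK (a + b - 2 * j)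
  | 0, a, _ => by simp [cheb]
  | 1, a, ha => by
    obtain ⟨m, rfl⟩ := Nat.exists_eq_add_of_le ha
    show cheb C KK (1 + m) * C = _
    rw [← ((cheb_comm h (1 + m)).1).eq]
    have h1 : 1 + m = m + 1 := by omega
    rw [h1, cheb_C_mul, Finset.sum_range_succ, Finset.sum_range_one]
    norm_num
    try rw [show m + 1 + 1 - 2 = m from by omega]
    try abel
  | b + 2, a, ha => by
    obtain ⟨m, rfl⟩ : ∃ m, a = m + 1 := ⟨a - 1, by omega⟩
    have hm : b + 1 ≤ m := by omega
    have IH1 := cheb_mul h (b + 1) (m + 2) (by omega)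
    have IH2 := cheb_mul h (b + 1) m (by omega)
    have IH3 := cheb_mul h b (m + 1) (by omega)
    have hstep : cheb C KK (m + 1) * cheb C KK (b + 2) =
        cheb C KK (m + 2) * cheb C KK (b + 1)
          + KK * (cheb C KK m * cheb C KK (b + 1))
          - KK * (cheb C KK (m + 1) * cheb C KK b) := by
      show cheb C KK (m + 1) * (C * cheb C KK (b + 1) - KK * cheb C KK b) = _
      rw [mul_sub, ← mul_assoc, ← ((cheb_comm h (m + 1)).1).eq, cheb_C_mul,
        ← mul_assoc, ← ((cheb_comm h (m + 1)).2).eq, mul_assoc, add_mul, mul_assoc]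
    rw [hstep, IH1, IH2, IH3]
    have e2 : KK * (∑ j ∈ Finset.range (b + 1 + 1), KK ^ j * cheb C KK (m + (b + 1) - 2 * j))
        - KK * (∑ j ∈ Finset.range (b + 1), KK ^ j * cheb C KK (m + 1 + b - 2 * j))
        = KK ^ (b + 2) * cheb C KK (m + 1 + (b + 2) - 2 * (b + 2)) := by
      have hsame : ∀ j ∈ Finset.range (b + 1),
          KK ^ j * cheb C KK (m + 1 + b - 2 * j) =
          KK ^ j * cheb C KK (m + (b + 1) - 2 * j) := by
        intro j hj
        congr 2
        omega
      rw [Finset.sum_congr rfl hsame, Finset.sum_range_succ, mul_add, add_sub_cancel_left,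
        ← mul_assoc, ← pow_succ']
      congr 2
      omega
    rw [add_sub_assoc, e2, Finset.sum_range_succ (n := b + 2)]
    congr 1
    apply Finset.sum_congr rfl
    intro j hj
    congr 2
    omega

/-- `C⁽ᵃ⁾ C⁽ᵇ⁾ = ∑_{j=0}^{min(a,b)} (K₋K₊)^j C⁽ᵃ⁺ᵇ⁻²ʲ⁾` in `U_q(s̃l₂)`. -/
theorem statement7 {A : Type*} [Ring A] [Algebra (RatFunc ℚ) A]
    (q : RatFunc ℚ) (hq : q = RatFunc.X)
    (E F Kp Km : A)
    (hK : Kp * Km = Km * Kp)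
    (hKpE : Kp * E = (q ^ 2) • (E * Kp))
    (hKmE : Km * E = (q⁻¹ ^ 2) • (E * Km))
    (hKpF : Kp * F = (q⁻¹ ^ 2) • (F * Kp))
    (hKmF : Km * F = (q ^ 2) • (F * Km))
    (hEF : E * F - F * E = (q⁻¹ - q) • (Kp - Km))
    (C : A) (hC : C = F * E - q • Kp - q⁻¹ • Km) (a b : ℕ) :
    cheb C (Kp * Km) a * cheb C (Kp * Km) b =
      ∑ j ∈ Finset.range (min a b + 1), (Km * Kp) ^ j * cheb C (Kp * Km) (a + b - 2 * j) := by
  have hq0 : q ≠ 0 := by rw [hq]; exact RatFunc.X_ne_zero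
  have hqc : q⁻¹ ^ 2 * q ^ 2 = 1 := by
    rw [← mul_pow, inv_mul_cancel₀ hq0, one_pow]
  have hqc' : q ^ 2 * q⁻¹ ^ 2 = 1 := by
    rw [← mul_pow, mul_inv_cancel₀ hq0, one_pow]
  have hKKE : Kp * Km * E = E * (Kp * Km) := by
    calc Kp * Km * E = Kp * (Km * E) := mul_assoc _ _ _
      _ = (q⁻¹ ^ 2) • (Kp * (E * Km)) := by rw [hKmE, mul_smul_comm]
      _ = (q⁻¹ ^ 2) • ((Kp * E) * Km) := by rw [mul_assoc]
      _ = (q⁻¹ ^ 2 * q ^ 2) • (E * Kp * Km) := by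
            rw [hKpE, smul_mul_assoc, smul_smul]
      _ = E * (Kp * Km) := by rw [hqc, one_smul, mul_assoc]
  have hKKF : Kp * Km * F = F * (Kp * Km) := by
    calc Kp * Km * F = Kp * (Km * F) := mul_assoc _ _ _
      _ = (q ^ 2) • (Kp * (F * Km)) := by rw [hKmF, mul_smul_comm]
      _ = (q ^ 2) • ((Kp * F) * Km) := by rw [mul_assoc]
      _ = (q ^ 2 * q⁻¹ ^ 2) • (F * Kp * Km) := by
            rw [hKpF, smul_mul_assoc, smul_smul]
      _ = F * (Kp * Km) := by rw [hqc', one_smul, mul_assoc]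
  have hKKKp : Kp * Km * Kp = Kp * (Kp * Km) := by
    rw [mul_assoc, ← hK]
  have hKKKm : Kp * Km * Km = Km * (Kp * Km) := by
    rw [← mul_assoc, ← hK]
  have hcomm : Commute C (Kp * Km) := by
    show C * (Kp * Km) = (Kp * Km) * C
    have h1 : F * E * (Kp * Km) = Kp * Km * (F * E) := by
      rw [mul_assoc, ← hKKE, ← mul_assoc, ← hKKF, mul_assoc]
    rw [hC, sub_mul, sub_mul, mul_sub, mul_sub, h1, smul_mul_assoc, smul_mul_assoc,
      mul_smul_comm, mul_smul_comm, hKKKp, hKKKm]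
  rw [← hK]
  rcases le_total b a with hba | hab
  · rw [min_eq_right hba]
    exact cheb_mul hcomm b a hba
  · rw [min_eq_left hab, (cheb_commute hcomm a b).eq]
    rw [cheb_mul hcomm a b hab]
    apply Finset.sum_congr rfl
    intro j hj
    congr 2
    omega
end
end

section
/- Let A be an associative unital algebra over k = ℚ(q) containing elements E, F, K₊, K₋ satisfying the U_q(s̃l₂) relations, set C := FE − qK₊ − q⁻¹K₋, and for t ≥ 0 set X_t := Σ_{s=0}^{t} (−1)^s q^s · binom[q²]{t}{s} · K₊^s F^{t−s} E^{t−s}. Then for every integer t ≥ 1: X_t · C = X_{t+1} − q^{−2t−1} K₋ X_t + (1 − q^{−2t}) K₋K₊ X_{t−1}. -/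
/-!
Write `X_t = ∑_{s+m=t} c(s,m) K₊^s F^m E^m`. Since `K₊` and `K₋` commute with `F^m E^m`, moving
`E^m` past `F` gives `F^m E^m C = F^{m+1} E^{m+1} - q^{2m+1} K₊ F^m E^m - q^{-2m-1} K₋ F^m E^m`.
Summed over `s + m = t`, the first two families recombine into `X_{t+1}` by the `q`-Pascal rule for
the coefficients, and the `K₋`-family turns into the last two terms of the recursion by the
absorption identity `(v^{s+1} - 1) binom[v]{s+m+1}{s+1} = (v^{s+m+1} - 1) binom[v]{s+m}{s}`,
`v = q²`.
-/

noncomputable section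

open Finset

lemma RatFunc.not_isOfFinOrder_X {K : Type*} [CommRing K] [IsDomain K] :
    ¬IsOfFinOrder (RatFunc.X : RatFunc K) := by
  rw [isOfFinOrder_iff_pow_eq_one]
  rintro ⟨n, hn, hXn⟩
  refine RatFunc.transcendental_X ⟨(Polynomial.X ^ n - Polynomial.C 1 : Polynomial K),
    Polynomial.X_pow_sub_C_ne_zero hn 1, ?_⟩
  simp [hXn]

lemma pow_succ_sub_one_ne_zero_of_not_isOfFinOrder {R : Type*} [Ring R] {v : R}
    (hv : ¬IsOfFinOrder v) (k : ℕ) : v ^ (k + 1) - 1 ≠ 0 :=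
  sub_ne_zero.2 fun h => hv (isOfFinOrder_iff_pow_eq_one.2 ⟨k + 1, k.succ_pos, h⟩)

section GaussianBinomial

variable {v : RatFunc ℚ}

lemma gbinom_zero_right (a : ℕ) : gbinom v a 0 = 1 := by
  simp [gbinom]

lemma gbinom_self (hv : ¬IsOfFinOrder v) (n : ℕ) : gbinom v n n = 1 :=
  prod_eq_one fun i _ => by
    simpa using div_self (pow_succ_sub_one_ne_zero_of_not_isOfFinOrder hv i)

lemma gbinom_add_left_eq_prod (s m : ℕ) :
    gbinom v (s + m) s = ∏ i ∈ range s, (v ^ (m + i + 1) - 1) / (v ^ (i + 1) - 1) := by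
  simp [gbinom]

lemma sub_one_mul_gbinom_succ_succ (hv : ¬IsOfFinOrder v) (s m : ℕ) :
    (v ^ (s + 1) - 1) * gbinom v (s + 1 + m) (s + 1) =
      (v ^ (s + m + 1) - 1) * gbinom v (s + m) s := by
  have := pow_succ_sub_one_ne_zero_of_not_isOfFinOrder hv s
  rw [gbinom_add_left_eq_prod, gbinom_add_left_eq_prod, prod_range_succ]
  field_simp
  ring_nf

lemma sub_one_mul_gbinom_succ (hv : ¬IsOfFinOrder v) (s m : ℕ) :
    (v ^ (s + 1) - 1) * gbinom v (s + 1 + m) (s + 1) =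
      (v ^ (m + 1) - 1) * gbinom v (s + (m + 1)) s := by
  have hden : ∏ i ∈ range s, (v ^ (i + 1) - 1) ≠ 0 :=
    prod_ne_zero_iff.2 fun i _ => pow_succ_sub_one_ne_zero_of_not_isOfFinOrder hv i
  have := pow_succ_sub_one_ne_zero_of_not_isOfFinOrder hv s
  have hnum : ∏ i ∈ range s, (v ^ (m + (i + 1) + 1) - 1) =
      ∏ i ∈ range s, (v ^ (m + 1 + i + 1) - 1) :=
    prod_congr rfl fun i _ => by ring_nf
  rw [gbinom_add_left_eq_prod, gbinom_add_left_eq_prod, prod_div_distrib, prod_div_distrib,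
    prod_range_succ' (fun i => v ^ (m + i + 1) - 1), prod_range_succ (fun i => v ^ (i + 1) - 1),
    hnum]
  field_simp

lemma gbinom_pascal (hv : ¬IsOfFinOrder v) (s m : ℕ) :
    gbinom v (s + 1 + (m + 1)) (s + 1) =
      gbinom v (s + 1 + m) (s + 1) + v ^ (m + 1) * gbinom v (s + (m + 1)) s := by
  refine mul_left_cancel₀ (pow_succ_sub_one_ne_zero_of_not_isOfFinOrder hv s) ?_
  rw [mul_add, mul_left_comm, sub_one_mul_gbinom_succ_succ hv s (m + 1),
    sub_one_mul_gbinom_succ hv]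
  ring_nf

end GaussianBinomial

section Coefficients

variable {q : RatFunc ℚ}

/-- The coefficient of `K₊^s F^m E^m` in `X_{s+m}`; indexing by `(s, m)` rather than by `(t, s)`
avoids the truncated subtraction `t - s`. -/
def xCoeff (q : RatFunc ℚ) (s m : ℕ) : RatFunc ℚ :=
  (-1) ^ s * q ^ s * gbinom (q ^ 2) (s + m) s

lemma xCoeff_zero_left (m : ℕ) : xCoeff q 0 m = 1 := by
  simp [xCoeff, gbinom_zero_right]

lemma xCoeff_succ_zero (hv : ¬IsOfFinOrder (q ^ 2)) (s : ℕ) :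
    xCoeff q (s + 1) 0 = -(xCoeff q s 0 * q) := by
  simp only [xCoeff, add_zero, gbinom_self hv]
  ring

lemma xCoeff_succ_succ (hv : ¬IsOfFinOrder (q ^ 2)) (s m : ℕ) :
    xCoeff q (s + 1) (m + 1) =
      xCoeff q (s + 1) m - xCoeff q s (m + 1) * q ^ (2 * (m + 1) + 1) := by
  simp only [xCoeff, gbinom_pascal hv]
  ring

lemma xCoeff_absorb (hq : q ≠ 0) (hv : ¬IsOfFinOrder (q ^ 2)) (s m : ℕ) :
    xCoeff q (s + 1) m * (q⁻¹ ^ (2 * m + 1) - q⁻¹ ^ (2 * (s + m + 1) + 1)) =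
      -((1 - q⁻¹ ^ (2 * (s + m + 1))) * xCoeff q s m) := by
  have h := sub_one_mul_gbinom_succ_succ hv s m
  simp only [xCoeff, inv_pow]
  field_simp
  linear_combination -(-1) ^ s * q ^ (s + 1) * q ^ (2 * m + 1) * q ^ (2 * (s + m + 1)) * h

end Coefficients

section AntidiagonalSums

variable {R M : Type*} [CommRing R] [AddCommGroup M] [Module R M]

lemma sum_antidiagonal_pascal (β : ℕ → ℕ → R) (c : ℕ → R) (G : ℕ → ℕ → M)
    (h_zero_left : ∀ m, β 0 (m + 1) = β 0 m) (h_zero_right : ∀ s, β (s + 1) 0 = -(β s 0 * c 0))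
    (h_succ_succ : ∀ s m, β (s + 1) (m + 1) = β (s + 1) m - β s (m + 1) * c (m + 1)) (t : ℕ) :
    ∑ p ∈ antidiagonal t, β p.1 p.2 • G p.1 (p.2 + 1) -
        ∑ p ∈ antidiagonal t, (β p.1 p.2 * c p.2) • G (p.1 + 1) p.2 =
      ∑ p ∈ antidiagonal (t + 1), β p.1 p.2 • G p.1 p.2 := by
  cases t with
  | zero =>
    simp [Nat.sum_antidiagonal_succ, h_zero_left, h_zero_right, sub_eq_add_neg]
  | succ n =>
    conv_rhs => rw [Nat.sum_antidiagonal_succ, Nat.sum_antidiagonal_succ']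
    rw [Nat.sum_antidiagonal_succ,
      Nat.sum_antidiagonal_succ' (f := fun p => (β p.1 p.2 * c p.2) • G (p.1 + 1) p.2)]
    simp only [h_succ_succ, sub_smul, sum_sub_distrib, h_zero_left, h_zero_right, neg_smul]
    abel

lemma sum_antidiagonal_weighted (β : ℕ → ℕ → R) (w u : ℕ → R) (H : ℕ → ℕ → M) (hu : u 0 = 0)
    (h : ∀ s m, β (s + 1) m * (w m - w (s + m + 1)) = -(u (s + m + 1) * β s m)) (t : ℕ) :
    ∑ p ∈ antidiagonal t, (β p.1 p.2 * w p.2) • H p.1 p.2 =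
      w t • ∑ p ∈ antidiagonal t, β p.1 p.2 • H p.1 p.2 -
        u t • ∑ p ∈ antidiagonal (t - 1), β p.1 p.2 • H (p.1 + 1) p.2 := by
  cases t with
  | zero => simp [hu, smul_smul, mul_comm]
  | succ n =>
    have key : ∑ p ∈ antidiagonal (n + 1), (β p.1 p.2 * (w p.2 - w (n + 1))) • H p.1 p.2 =
        -(u (n + 1) • ∑ p ∈ antidiagonal n, β p.1 p.2 • H (p.1 + 1) p.2) := by
      rw [Nat.sum_antidiagonal_succ, sub_self, mul_zero, zero_smul, zero_add, smul_sum,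
        ← sum_neg_distrib]
      refine sum_congr rfl fun p hp => ?_
      rw [← mem_antidiagonal.1 hp, h, neg_smul, smul_smul]
    rw [Nat.add_sub_cancel, sub_eq_add_neg, ← key, smul_sum, ← sum_add_distrib]
    refine sum_congr rfl fun p _ => ?_
    rw [smul_smul, ← add_smul]
    ring_nf

end AntidiagonalSums

section QuantumRelations

lemma mul_pow_eq_smul_pow_mul {R A : Type*} [CommSemiring R] [Semiring A] [Algebra R A]
    {c : R} {K Y : A} (h : K * Y = c • (Y * K)) (n : ℕ) : K * Y ^ n = c ^ n • (Y ^ n * K) := by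
  induction n with
  | zero => simp
  | succ n ih =>
    rw [pow_succ, ← mul_assoc, ih, smul_mul_assoc, mul_assoc, h, mul_smul_comm, smul_smul,
      ← pow_succ, ← mul_assoc, ← pow_succ]

lemma commute_pow_mul_pow {R A : Type*} [CommSemiring R] [Semiring A] [Algebra R A]
    {c d : R} {K E F : A} (hE : K * E = c • (E * K)) (hF : K * F = d • (F * K)) (hdc : d * c = 1)
    (n : ℕ) : Commute K (F ^ n * E ^ n) := by
  rw [Commute, SemiconjBy, ← mul_assoc, mul_pow_eq_smul_pow_mul hF, smul_mul_assoc, mul_assoc,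
    mul_pow_eq_smul_pow_mul hE, mul_smul_comm, smul_smul, ← mul_pow, hdc, one_pow, one_smul,
    mul_assoc]

variable {𝕜 A : Type*} [Field 𝕜] [Ring A] [Algebra 𝕜 A] {q : 𝕜} {E F Kp Km : A}

lemma E_pow_mul_F_mul_E (hq : q ≠ 0) (hKpE : Kp * E = (q ^ 2) • (E * Kp))
    (hKmE : Km * E = (q⁻¹ ^ 2) • (E * Km)) (hEF : E * F - F * E = (q⁻¹ - q) • (Kp - Km))
    (n : ℕ) :
    E ^ n * F * E = F * E ^ (n + 1) + (q - q ^ (2 * n + 1)) • (E ^ n * Kp) +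
      (q⁻¹ - q⁻¹ ^ (2 * n + 1)) • (E ^ n * Km) := by
  induction n with
  | zero => simp
  | succ n ih =>
    have hEF' : E * F = F * E + (q⁻¹ - q) • (Kp - Km) := by rw [← hEF]; abel
    calc E ^ (n + 1) * F * E = E * (E ^ n * F * E) := by simp only [pow_succ', mul_assoc]
      _ = E * F * E ^ (n + 1) + (q - q ^ (2 * n + 1)) • (E ^ (n + 1) * Kp) +
            (q⁻¹ - q⁻¹ ^ (2 * n + 1)) • (E ^ (n + 1) * Km) := by
        rw [ih, mul_add, mul_add, mul_smul_comm, mul_smul_comm, ← mul_assoc, ← mul_assoc,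
          ← mul_assoc, ← pow_succ']
      _ = _ := by
        rw [hEF', add_mul, smul_mul_assoc, sub_mul, mul_pow_eq_smul_pow_mul hKpE,
          mul_pow_eq_smul_pow_mul hKmE, mul_assoc, ← pow_succ']
        match_scalars
        · rfl
        · field_simp
          ring
        · simp only [inv_pow]
          field_simp
          ring

lemma F_pow_mul_E_pow_mul_casimir (hq : q ≠ 0) (hKpE : Kp * E = (q ^ 2) • (E * Kp))
    (hKmE : Km * E = (q⁻¹ ^ 2) • (E * Km)) (hKpF : Kp * F = (q⁻¹ ^ 2) • (F * Kp))
    (hKmF : Km * F = (q ^ 2) • (F * Km)) (hEF : E * F - F * E = (q⁻¹ - q) • (Kp - Km)) (n : ℕ) :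
    F ^ n * E ^ n * (F * E - q • Kp - q⁻¹ • Km) =
      F ^ (n + 1) * E ^ (n + 1) - q ^ (2 * n + 1) • (Kp * (F ^ n * E ^ n)) -
        q⁻¹ ^ (2 * n + 1) • (Km * (F ^ n * E ^ n)) := by
  have hKp : Commute Kp (F ^ n * E ^ n) :=
    commute_pow_mul_pow hKpE hKpF (by rw [← mul_pow, inv_mul_cancel₀ hq, one_pow]) n
  have hKm : Commute Km (F ^ n * E ^ n) :=
    commute_pow_mul_pow hKmE hKmF (by rw [← mul_pow, mul_inv_cancel₀ hq, one_pow]) n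
  have hFE : F ^ n * E ^ n * (F * E) = F ^ (n + 1) * E ^ (n + 1) +
      (q - q ^ (2 * n + 1)) • (F ^ n * E ^ n * Kp) +
      (q⁻¹ - q⁻¹ ^ (2 * n + 1)) • (F ^ n * E ^ n * Km) := by
    rw [show F ^ n * E ^ n * (F * E) = F ^ n * (E ^ n * F * E) by simp only [mul_assoc],
      E_pow_mul_F_mul_E hq hKpE hKmE hEF]
    simp only [mul_add, mul_smul_comm, ← mul_assoc, ← pow_succ]
  rw [mul_sub, mul_sub, hFE, mul_smul_comm, mul_smul_comm, ← hKp.eq, ← hKm.eq]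
  module

lemma Kp_pow_mul_F_pow_mul_E_pow_mul_casimir (hq : q ≠ 0) (hK : Kp * Km = Km * Kp)
    (hKpE : Kp * E = (q ^ 2) • (E * Kp)) (hKmE : Km * E = (q⁻¹ ^ 2) • (E * Km))
    (hKpF : Kp * F = (q⁻¹ ^ 2) • (F * Kp)) (hKmF : Km * F = (q ^ 2) • (F * Km))
    (hEF : E * F - F * E = (q⁻¹ - q) • (Kp - Km)) (s m : ℕ) :
    Kp ^ s * F ^ m * E ^ m * (F * E - q • Kp - q⁻¹ • Km) =
      Kp ^ s * F ^ (m + 1) * E ^ (m + 1) - q ^ (2 * m + 1) • (Kp ^ (s + 1) * F ^ m * E ^ m) -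
        q⁻¹ ^ (2 * m + 1) • (Km * (Kp ^ s * F ^ m * E ^ m)) := by
  rw [mul_assoc (Kp ^ s), mul_assoc (Kp ^ s),
    F_pow_mul_E_pow_mul_casimir hq hKpE hKmE hKpF hKmF hEF, mul_sub, mul_sub, mul_smul_comm,
    mul_smul_comm, ← mul_assoc (Kp ^ s) Kp, ← pow_succ, ← mul_assoc (Kp ^ s) Km,
    (Commute.pow_left hK s).eq]
  simp only [mul_assoc]

end QuantumRelations

theorem statement9_general {A : Type*} [Ring A] [Algebra (RatFunc ℚ) A]
    (q : RatFunc ℚ) (hq : q = RatFunc.X)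
    (E F Kp Km : A)
    (hK : Kp * Km = Km * Kp)
    (hKpE : Kp * E = (q ^ 2) • (E * Kp))
    (hKmE : Km * E = (q⁻¹ ^ 2) • (E * Km))
    (hKpF : Kp * F = (q⁻¹ ^ 2) • (F * Kp))
    (hKmF : Km * F = (q ^ 2) • (F * Km))
    (hEF : E * F - F * E = (q⁻¹ - q) • (Kp - Km))
    (C : A) (hC : C = F * E - q • Kp - q⁻¹ • Km)
    (X : ℕ → A)
    (hX : ∀ t : ℕ, X t = ∑ s ∈ Finset.range (t + 1),
      (((-1 : RatFunc ℚ) ^ s * q ^ s * gbinom (q ^ 2) t s) •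
        (Kp ^ s * F ^ (t - s) * E ^ (t - s))))
    (t : ℕ) :
    X t * C = X (t + 1) - (q ^ (-(2 * (t : ℤ)) - 1)) • (Km * X t) +
      ((1 : RatFunc ℚ) - q ^ (-(2 * (t : ℤ)))) • (Km * Kp * X (t - 1)) := by
  have hq0 : q ≠ 0 := hq ▸ RatFunc.X_ne_zero
  have hv : ¬IsOfFinOrder (q ^ 2) := by
    simpa [hq, isOfFinOrder_pow] using RatFunc.not_isOfFinOrder_X
  set G : ℕ → ℕ → A := fun s m => Kp ^ s * F ^ m * E ^ m with hG
  have hXG (n : ℕ) : X n = ∑ p ∈ antidiagonal n, xCoeff q p.1 p.2 • G p.1 p.2 := by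
    rw [hX, Nat.sum_antidiagonal_eq_sum_range_succ_mk]
    refine sum_congr rfl fun s hs => ?_
    rw [xCoeff, Nat.add_sub_cancel' (mem_range_succ_iff.1 hs)]
  have hGC (s m : ℕ) : G s m * C =
      G s (m + 1) - q ^ (2 * m + 1) • G (s + 1) m - q⁻¹ ^ (2 * m + 1) • (Km * G s m) := by
    rw [hC]
    exact Kp_pow_mul_F_pow_mul_E_pow_mul_casimir hq0 hK hKpE hKmE hKpF hKmF hEF s m
  have hKmKp (s m : ℕ) : Km * Kp * G s m = Km * G (s + 1) m := by
    simp only [hG, mul_assoc, pow_succ']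
  have hzpow (n : ℕ) : q ^ (-(n : ℤ)) = q⁻¹ ^ n := by rw [zpow_neg, zpow_natCast, inv_pow]
  rw [show -(2 * (t : ℤ)) - 1 = -((2 * t + 1 : ℕ) : ℤ) by push_cast; ring,
    show -(2 * (t : ℤ)) = -((2 * t : ℕ) : ℤ) by push_cast; ring, hzpow, hzpow, hXG t,
    hXG (t - 1), hXG (t + 1), sum_mul, mul_sum, mul_sum]
  simp only [smul_mul_assoc, hGC, smul_sub, sum_sub_distrib, smul_smul, mul_smul_comm, hKmKp]
  rw [sum_antidiagonal_pascal _ (fun m => q ^ (2 * m + 1)) G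
      (fun _ => by rw [xCoeff_zero_left, xCoeff_zero_left]) (by simpa using xCoeff_succ_zero hv)
      (xCoeff_succ_succ hv),
    sum_antidiagonal_weighted _ (fun m => q⁻¹ ^ (2 * m + 1)) (fun n => 1 - q⁻¹ ^ (2 * n))
      (fun s m => Km * G s m) (by simp) (xCoeff_absorb hq0 hv)]
  abel

/-- the recursion `X_t C = X_{t+1} - q^{-2t-1} K₋ X_t + (1 - q^{-2t}) K₋K₊ X_{t-1}`
for `t ≥ 1`, where `X_t = ∑_{s=0}^t (-1)^s q^s binom[q²]{t}{s} K₊^s F^{t-s} E^{t-s}` and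
`C = FE - qK₊ - q⁻¹K₋`. -/
theorem statement9 {A : Type*} [Ring A] [Algebra (RatFunc ℚ) A]
    (q : RatFunc ℚ) (hq : q = RatFunc.X)
    (E F Kp Km : A)
    (hK : Kp * Km = Km * Kp)
    (hKpE : Kp * E = (q ^ 2) • (E * Kp))
    (hKmE : Km * E = (q⁻¹ ^ 2) • (E * Km))
    (hKpF : Kp * F = (q⁻¹ ^ 2) • (F * Kp))
    (hKmF : Km * F = (q ^ 2) • (F * Km))
    (hEF : E * F - F * E = (q⁻¹ - q) • (Kp - Km))
    (C : A) (hC : C = F * E - q • Kp - q⁻¹ • Km)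
    (X : ℕ → A)
    (hX : ∀ t : ℕ, X t = ∑ s ∈ Finset.range (t + 1),
      (((-1 : RatFunc ℚ) ^ s * q ^ s * gbinom (q ^ 2) t s) •
        (Kp ^ s * F ^ (t - s) * E ^ (t - s))))
    (t : ℕ) (ht : 1 ≤ t) :
    X t * C = X (t + 1) - (q ^ (-(2 * (t : ℤ)) - 1)) • (Km * X t) +
      ((1 : RatFunc ℚ) - q ^ (-(2 * (t : ℤ)))) • (Km * Kp * X (t - 1)) :=
  statement9_general q hq E F Kp Km hK hKpE hKmE hKpF hKmF hEF C hC X hX t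
end
end

section
/- For all integers m, a, b ≥ 0 with a + b ≤ m, the following identity holds in ℤ[ν] (both sides being polynomials): Σ_{r=0}^{min(a,b)} (−1)^r · ν^{r(r−1)/2} · [m−r]_ν! / ([a−r]_ν! · [b−r]_ν! · [r]_ν!) = ν^{ab} · [m−a−b]_ν! · binom[ν]{m−b}{a} · binom[ν]{m−a}{b}. -/
/-!
Dividing the identity by `[m-b]! / [a]!` turns its left side into the alternating sum `S(a, m, b) =`
`∑_r (-1)^r ν^(r(r-1)/2) binom[ν]{a}{r} binom[ν]{m-r}{b-r}` and its right side into
`ν^(ab) binom[ν]{m-a}{b}`, a q-analogue of `∑_r (-1)^r C(a,r) C(m-r,b-r) = C(m-a,b)`.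
Applying q-Pascal to `binom[ν]{a+1}{r}` gives the recurrence
`S(a+1, m, b+1) = S(a, m, b+1) - ν^a S(a, m-1, b)`, and induction on `a` closes it with
q-Pascal once more.
-/

noncomputable section

/-- The quantum integer `[a]_ν = (ν^a - 1)/(ν - 1)` in `ℚ(ν)`. -/
def qint (a : ℕ) : RatFunc ℚ := (RatFunc.X ^ a - 1) / (RatFunc.X - 1)

/-- The quantum factorial `[a]_ν! = ∏_{j=1}^a [j]_ν` in `ℚ(ν)`. -/
def qfac (a : ℕ) : RatFunc ℚ := ∏ j ∈ Finset.range a, qint (j + 1)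

/-- The Gaussian binomial coefficient `binom[ν]{a}{n} = [a]_ν!/([n]_ν! [a-n]_ν!)`. -/
def qbinom (a n : ℕ) : RatFunc ℚ := qfac a / (qfac n * qfac (a - n))

open Finset
open RatFunc (X)

lemma RatFunc.X_pow_sub_one_ne_zero {K : Type*} [Field K] {n : ℕ} (hn : n ≠ 0) :
    (X : RatFunc K) ^ n - 1 ≠ 0 := by
  simpa [RatFunc.algebraMap_X] using
    RatFunc.algebraMap_ne_zero (Polynomial.X_pow_sub_C_ne_zero (Nat.pos_of_ne_zero hn) (1 : K))

lemma Nat.succ_mul_div_two (i : ℕ) : (i + 1) * i / 2 = i * (i - 1) / 2 + i := by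
  cases i with
  | zero => rfl
  | succ k =>
    rw [Nat.add_sub_cancel, show (k + 1 + 1) * (k + 1) = (k + 1) * k + (k + 1) * 2 by ring,
      Nat.add_mul_div_right _ _ two_pos]

lemma qint_ne_zero {n : ℕ} (hn : n ≠ 0) : qint n ≠ 0 :=
  div_ne_zero (RatFunc.X_pow_sub_one_ne_zero hn)
    (by simpa using RatFunc.X_pow_sub_one_ne_zero one_ne_zero)

lemma qint_add (x y : ℕ) : qint (x + y) = qint x + X ^ x * qint y := by
  rw [qint, qint, qint, mul_div_assoc', ← add_div]
  ring

lemma qfac_ne_zero (n : ℕ) : qfac n ≠ 0 :=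
  prod_ne_zero_iff.mpr fun j _ => qint_ne_zero j.succ_ne_zero

lemma qfac_zero : qfac 0 = 1 := prod_range_zero _

lemma qfac_succ (n : ℕ) : qfac (n + 1) = qfac n * qint (n + 1) := prod_range_succ _ _

lemma qbinom_zero_right (n : ℕ) : qbinom n 0 = 1 := by
  rw [qbinom, qfac_zero, Nat.sub_zero, one_mul, div_self (qfac_ne_zero n)]

lemma qbinom_self (n : ℕ) : qbinom n n = 1 := by
  rw [qbinom, Nat.sub_self, qfac_zero, mul_one, div_self (qfac_ne_zero n)]

-- The two q-Pascal rules come from the two ways of splitting `[k+d+2] = [(k+1) + (d+1)]`.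
lemma qbinom_succ_succ {n k : ℕ} (hk : k < n) :
    qbinom (n + 1) (k + 1) = qbinom n k + X ^ (k + 1) * qbinom n (k + 1) := by
  obtain ⟨d, rfl⟩ : ∃ d, n = k + d + 1 := ⟨n - k - 1, by omega⟩
  rw [qbinom, qbinom, qbinom, show k + d + 1 + 1 - (k + 1) = d + 1 by omega,
    show k + d + 1 - k = d + 1 by omega, show k + d + 1 - (k + 1) = d by omega,
    qfac_succ (k + d + 1), show k + d + 1 + 1 = (k + 1) + (d + 1) by omega, qint_add,
    qfac_succ k, qfac_succ d]
  have := qfac_ne_zero k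
  have := qfac_ne_zero d
  have := qint_ne_zero k.succ_ne_zero
  have := qint_ne_zero d.succ_ne_zero
  field_simp

lemma qbinom_succ_succ' {n k : ℕ} (hk : k < n) :
    qbinom (n + 1) (k + 1) = X ^ (n - k) * qbinom n k + qbinom n (k + 1) := by
  obtain ⟨d, rfl⟩ : ∃ d, n = k + d + 1 := ⟨n - k - 1, by omega⟩
  rw [qbinom, qbinom, qbinom, show k + d + 1 + 1 - (k + 1) = d + 1 by omega,
    show k + d + 1 - k = d + 1 by omega, show k + d + 1 - (k + 1) = d by omega,
    qfac_succ (k + d + 1), show k + d + 1 + 1 = (d + 1) + (k + 1) by omega, qint_add,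
    qfac_succ k, qfac_succ d]
  have := qfac_ne_zero k
  have := qfac_ne_zero d
  have := qint_ne_zero k.succ_ne_zero
  have := qint_ne_zero d.succ_ne_zero
  field_simp
  ring

/-- `binom[ν]{n}{k}` truncated to vanish for `k > n`, where `qbinom n k` is not zero. -/
def qchoose (n k : ℕ) : RatFunc ℚ := if k ≤ n then qbinom n k else 0

lemma qchoose_of_le {n k : ℕ} (h : k ≤ n) : qchoose n k = qbinom n k := if_pos h

lemma qchoose_of_lt {n k : ℕ} (h : n < k) : qchoose n k = 0 := if_neg h.not_ge

lemma qchoose_zero_right (n : ℕ) : qchoose n 0 = 1 := by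
  rw [qchoose_of_le n.zero_le, qbinom_zero_right]

lemma qchoose_self (n : ℕ) : qchoose n n = 1 := by
  rw [qchoose_of_le le_rfl, qbinom_self]

lemma qchoose_succ_succ (n k : ℕ) :
    qchoose (n + 1) (k + 1) = qchoose n k + X ^ (k + 1) * qchoose n (k + 1) := by
  rcases lt_trichotomy k n with h | rfl | h
  · rw [qchoose_of_le (by omega), qchoose_of_le h.le, qchoose_of_le h, qbinom_succ_succ h]
  · rw [qchoose_self, qchoose_self, qchoose_of_lt k.lt_succ_self, mul_zero, add_zero]
  · rw [qchoose_of_lt (by omega), qchoose_of_lt h, qchoose_of_lt (by omega), mul_zero,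
      add_zero]

lemma qchoose_succ_succ' (n k : ℕ) :
    qchoose (n + 1) (k + 1) = X ^ (n - k) * qchoose n k + qchoose n (k + 1) := by
  rcases lt_trichotomy k n with h | rfl | h
  · rw [qchoose_of_le (by omega), qchoose_of_le h.le, qchoose_of_le h, qbinom_succ_succ' h]
  · rw [qchoose_self, qchoose_self, qchoose_of_lt k.lt_succ_self, Nat.sub_self, pow_zero,
      one_mul, add_zero]
  · rw [qchoose_of_lt (by omega), qchoose_of_lt h, qchoose_of_lt (by omega), mul_zero,
      add_zero]

def qAltSum (a m b : ℕ) : RatFunc ℚ :=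
  ∑ r ∈ range (b + 1), (-1) ^ r * X ^ (r * (r - 1) / 2) * qchoose a r * qchoose (m - r) (b - r)

lemma qAltSum_zero_left (m b : ℕ) : qAltSum 0 m b = qchoose m b := by
  rw [qAltSum, sum_eq_single_of_mem 0 (mem_range.mpr b.succ_pos)]
  · simp [qchoose_zero_right]
  · intro r _ hr
    rw [qchoose_of_lt (Nat.pos_of_ne_zero hr), mul_zero, zero_mul]

lemma qAltSum_zero_right (a m : ℕ) : qAltSum a m 0 = 1 := by
  simp [qAltSum, qchoose_zero_right]

lemma qAltSum_succ_succ (a m b : ℕ) :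
    qAltSum (a + 1) m (b + 1) = qAltSum a m (b + 1) - X ^ a * qAltSum a (m - 1) b := by
  have hterm (i : ℕ) :
      (-1) ^ (i + 1) * X ^ ((i + 1) * i / 2) * qchoose (a + 1) (i + 1) *
          qchoose (m - (i + 1)) (b - i)
        = (-1) ^ (i + 1) * X ^ ((i + 1) * i / 2) * qchoose a (i + 1) *
            qchoose (m - (i + 1)) (b - i)
          - X ^ a * ((-1) ^ i * X ^ (i * (i - 1) / 2) * qchoose a i *
            qchoose (m - 1 - i) (b - i)) := by
    rw [qchoose_succ_succ', Nat.sub_sub, add_comm 1 i, Nat.succ_mul_div_two]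
    rcases le_or_gt i a with hi | hi
    · obtain ⟨c, rfl⟩ : ∃ c, a = i + c := ⟨a - i, by omega⟩
      rw [Nat.add_sub_cancel_left, pow_add, pow_add]
      ring
    · rw [qchoose_of_lt hi]
      ring
  simp only [qAltSum, sum_range_succ' _ (b + 1), Nat.add_sub_cancel, Nat.add_sub_add_right,
    hterm, sum_sub_distrib, mul_sum, qchoose_zero_right]
  ring

theorem qAltSum_eq {a m b : ℕ} (h : a + b ≤ m) :
    qAltSum a m b = X ^ (a * b) * qchoose (m - a) b := by
  induction a generalizing m b with
  | zero => rw [qAltSum_zero_left, zero_mul, pow_zero, one_mul, Nat.sub_zero]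
  | succ a ih =>
    cases b with
    | zero => rw [qAltSum_zero_right, mul_zero, pow_zero, qchoose_zero_right, one_mul]
    | succ b =>
      obtain ⟨n, hn⟩ : ∃ n, m - a = n + 1 := ⟨m - a - 1, by omega⟩
      rw [qAltSum_succ_succ, ih (by omega), ih (by omega), hn, show m - 1 - a = n by omega,
        show m - (a + 1) = n by omega, qchoose_succ_succ]
      ring

lemma qmultinomial_eq_mul_qchoose {m a b r : ℕ} (hra : r ≤ a) (hrb : r ≤ b) (hbm : b ≤ m) :
    qfac (m - r) / (qfac (a - r) * qfac (b - r) * qfac r)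
      = qfac (m - b) / qfac a * (qchoose a r * qchoose (m - r) (b - r)) := by
  rw [qchoose_of_le hra, qchoose_of_le (by omega), qbinom, qbinom,
    show m - r - (b - r) = m - b by omega]
  have := qfac_ne_zero a
  have := qfac_ne_zero r
  have := qfac_ne_zero (a - r)
  have := qfac_ne_zero (b - r)
  have := qfac_ne_zero (m - b)
  field_simp

/-- for all `m, a, b ≥ 0` with `a + b ≤ m`,
`∑_{r=0}^{min(a,b)} (-1)^r ν^{r(r-1)/2} [m-r]_ν!/([a-r]_ν![b-r]_ν![r]_ν!)
  = ν^{ab} [m-a-b]_ν! binom[ν]{m-b}{a} binom[ν]{m-a}{b}`. -/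
theorem statement10 (m a b : ℕ) (h : a + b ≤ m) :
    ∑ r ∈ Finset.range (min a b + 1),
        ((-1 : RatFunc ℚ) ^ r * RatFunc.X ^ (r * (r - 1) / 2) *
          (qfac (m - r) / (qfac (a - r) * qfac (b - r) * qfac r))) =
      RatFunc.X ^ (a * b) * qfac (m - a - b) * qbinom (m - b) a * qbinom (m - a) b := by
  have hsum : ∑ r ∈ range (min a b + 1), (-1 : RatFunc ℚ) ^ r * X ^ (r * (r - 1) / 2) *
      (qfac (m - r) / (qfac (a - r) * qfac (b - r) * qfac r))
        = qfac (m - b) / qfac a * qAltSum a m b := by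
    have hsub : range (min a b + 1) ⊆ range (b + 1) := range_subset_range.mpr (by omega)
    rw [qAltSum, mul_sum, ← sum_subset hsub]
    · refine sum_congr rfl fun r hr => ?_
      rw [mem_range] at hr
      rw [qmultinomial_eq_mul_qchoose (by omega) (by omega) (by omega)]
      ring
    · intro r hrb hr
      rw [mem_range] at hrb hr
      rw [qchoose_of_lt (by omega)]
      ring
  rw [hsum, qAltSum_eq h, qchoose_of_le (by omega), qbinom, qbinom, Nat.sub_right_comm]
  have := qfac_ne_zero a
  have := qfac_ne_zero b
  have := qfac_ne_zero (m - a - b)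
  field_simp
end
end

section
/- Let A be an associative unital algebra over k = ℚ(q) containing elements E, F and invertible elements K₊, K₋ satisfying the U_q(s̃l₂) relations, and let C⁽ʳ⁾ be the Chebyshev-type central elements defined from C = FE − qK₊ − q⁻¹K₋. Suppose T : A → A is a k-algebra homomorphism with T(E) = q⁻¹K₊⁻¹F, T(F) = q⁻¹K₋⁻¹E, T(K₊) = K₊⁻¹ and T(K₋) = K₋⁻¹. Then T(C) = (K₊K₋)⁻¹·C, and more generally T(C⁽ʳ⁾) = (K₊K₋)^{−r}·C⁽ʳ⁾ for every integer r ≥ 0. -/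
noncomputable section

/-!
Moving `K₊⁻¹` past `E` produces a `q²` that cancels the two factors `q⁻¹` in `T(F)T(E)`, so
`T(FE) = (K₊K₋)⁻¹ EF`, and `EF - FE = (q⁻¹ - q)(K₊ - K₋)` turns this into `T(C) = (K₊K₋)⁻¹ C`.
In the recursion for `C⁽ʳ⁾`, `C` has weight `1` and `K₊K₋` weight `2`, and `(K₊K₋)⁻¹` commutes
with both (`K₊K₋` commutes with `E, F, K₊, K₋`), so `T` scales `C⁽ʳ⁾` by `(K₊K₋)⁻ʳ`.
-/

theorem Commute.inverse_left {M : Type*} [Monoid M] {a a' b : M} (h₁ : a * a' = 1)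
    (h₂ : a' * a = 1) (h : Commute a b) : Commute a' b :=
  Commute.units_inv_left (u := ⟨a, a', h₁, h₂⟩) h

section TwistedCommutation

variable {k A : Type*} [CommSemiring k] [Semiring A] [Algebra k A]

theorem commute_mul_of_twisted {a b x : A} {c d : k} (ha : a * x = c • (x * a))
    (hb : b * x = d • (x * b)) (hcd : d * c = 1) : Commute (a * b) x := by
  rw [Commute, SemiconjBy, mul_assoc, hb, mul_smul_comm, ← mul_assoc, ha, smul_mul_assoc,
    smul_smul, hcd, one_smul, mul_assoc]

theorem mul_inverse_eq_smul_of_twisted {u u' x : A} {c : k} (hu : u * u' = 1)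
    (hu' : u' * u = 1) (h : u * x = c • (x * u)) : x * u' = c • (u' * x) :=
  calc x * u' = u' * (u * x) * u' := by rw [← mul_assoc, hu', one_mul]
    _ = c • (u' * x * (u * u')) := by
      rw [h, mul_smul_comm, smul_mul_assoc, mul_assoc, mul_assoc, mul_assoc]
    _ = c • (u' * x) := by rw [hu, mul_one]

end TwistedCommutation

theorem map_cheb {A B F : Type*} [Ring A] [Ring B] [FunLike F A B] [RingHomClass F A B]
    (f : F) {C KK : A} {C' KK' u : B} (hCu : Commute u C') (hKKu : Commute u KK')
    (hC : f C = u * C') (hKK : f KK = u ^ 2 * KK') :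
    ∀ r, f (cheb C KK r) = u ^ r * cheb C' KK' r
  | 0 => by simp [cheb]
  | 1 => by simp [cheb, hC]
  | n + 2 => by
    rw [cheb, cheb, map_sub, map_mul, map_mul, hC, hKK, map_cheb f hCu hKKu hC hKK (n + 1),
      map_cheb f hCu hKKu hC hKK n, mul_sub]
    congr 1
    · rw [mul_assoc, ← mul_assoc C', ← (hCu.pow_left (n + 1)).eq, pow_succ' u (n + 1)]
      simp only [mul_assoc]
    · rw [mul_assoc, ← mul_assoc KK', ← (hKKu.pow_left n).eq, ← mul_assoc, ← mul_assoc,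
        ← pow_add, add_comm 2 n]
      simp only [mul_assoc]

theorem map_casimir {k A : Type*} [Field k] [Ring A] [Algebra k A] (T : A →ₐ[k] A) {q : k}
    (hq : q ≠ 0) {E F Kp Km Kpi Kmi : A} (hKpiKp : Kpi * Kp = 1) (hKmiKm : Kmi * Km = 1)
    (hKpiKm : Commute Kpi Km) (hEKpi : E * Kpi = (q ^ 2) • (Kpi * E))
    (hEF : E * F - F * E = (q⁻¹ - q) • (Kp - Km))
    (hTE : T E = q⁻¹ • (Kpi * F)) (hTF : T F = q⁻¹ • (Kmi * E))
    (hTKp : T Kp = Kpi) (hTKm : T Km = Kmi) :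
    T (F * E - q • Kp - q⁻¹ • Km) = Kmi * Kpi * (F * E - q • Kp - q⁻¹ • Km) := by
  have hTFE : T (F * E) = Kmi * Kpi * (E * F) := by
    rw [map_mul, hTE, hTF, smul_mul_smul, mul_assoc, ← mul_assoc E, hEKpi, smul_mul_assoc,
      mul_smul_comm, smul_smul, show q⁻¹ * q⁻¹ * q ^ 2 = 1 by field_simp, one_smul]
    simp only [mul_assoc]
  have hKp : Kmi * Kpi * Kp = Kmi := by rw [mul_assoc, hKpiKp, mul_one]
  have hKm : Kmi * Kpi * Km = Kpi := by rw [mul_assoc, hKpiKm.eq, ← mul_assoc, hKmiKm, one_mul]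
  rw [map_sub, map_sub, hTFE, map_smul, map_smul, hTKp, hTKm, eq_add_of_sub_eq' hEF]
  simp only [mul_add, mul_sub, mul_smul_comm, hKp, hKm]
  module

/-- if `T` is a `ℚ(q)`-algebra endomorphism of `A` with
`T(E) = q⁻¹K₊⁻¹F`, `T(F) = q⁻¹K₋⁻¹E`, `T(K₊) = K₊⁻¹`, `T(K₋) = K₋⁻¹`, then
`T(C) = (K₊K₋)⁻¹ C` and more generally `T(C⁽ʳ⁾) = (K₊K₋)^{-r} C⁽ʳ⁾` for all `r ≥ 0`. -/
theorem statement13 {A : Type*} [Ring A] [Algebra (RatFunc ℚ) A]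
    (q : RatFunc ℚ) (hq : q = RatFunc.X)
    (E F Kp Km Kpi Kmi : A)
    (hKpKpi : Kp * Kpi = 1) (hKpiKp : Kpi * Kp = 1)
    (hKmKmi : Km * Kmi = 1) (hKmiKm : Kmi * Km = 1)
    (hK : Kp * Km = Km * Kp)
    (hKpE : Kp * E = (q ^ 2) • (E * Kp))
    (hKmE : Km * E = (q⁻¹ ^ 2) • (E * Km))
    (hKpF : Kp * F = (q⁻¹ ^ 2) • (F * Kp))
    (hKmF : Km * F = (q ^ 2) • (F * Km))
    (hEF : E * F - F * E = (q⁻¹ - q) • (Kp - Km))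
    (T : A →ₐ[RatFunc ℚ] A)
    (hTE : T E = q⁻¹ • (Kpi * F)) (hTF : T F = q⁻¹ • (Kmi * E))
    (hTKp : T Kp = Kpi) (hTKm : T Km = Kmi)
    (C : A) (hC : C = F * E - q • Kp - q⁻¹ • Km) :
    T C = (Kmi * Kpi) * C ∧
      ∀ r : ℕ, T (cheb C (Kp * Km) r) = (Kmi * Kpi) ^ r * cheb C (Kp * Km) r := by
  have hq0 : q ≠ 0 := hq ▸ RatFunc.X_ne_zero
  have hq2 : q⁻¹ ^ 2 * q ^ 2 = 1 := by field_simp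
  have hKpKm : Commute Kp Km := hK
  have hKpiKm : Commute Kpi Km := hKpKm.inverse_left hKpKpi hKpiKp
  have hKpiKmi : Commute Kpi Kmi := (hKpiKm.symm.inverse_left hKmKmi hKmiKm).symm
  have hKKu : Kp * Km * (Kmi * Kpi) = 1 := by
    rw [mul_assoc, ← mul_assoc Km, hKmKmi, one_mul, hKpKpi]
  have huKK : Kmi * Kpi * (Kp * Km) = 1 := by
    rw [mul_assoc, ← mul_assoc Kpi, hKpiKp, one_mul, hKmiKm]
  have hTC : T C = Kmi * Kpi * C := hC ▸ map_casimir T hq0 hKpiKp hKmiKm hKpiKm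
    (mul_inverse_eq_smul_of_twisted hKpKpi hKpiKp hKpE) hEF hTE hTF hTKp hTKm
  have hKKE : Commute (Kp * Km) E := commute_mul_of_twisted hKpE hKmE hq2
  have hKKF : Commute (Kp * Km) F := commute_mul_of_twisted hKpF hKmF (by rwa [mul_comm])
  have hKKC : Commute (Kp * Km) C := hC ▸ ((hKKF.mul_right hKKE).sub_right
    (((Commute.refl Kp).mul_left hKpKm.symm).smul_right q)).sub_right
    ((hKpKm.mul_left (Commute.refl Km)).smul_right q⁻¹)
  have hTKK : T (Kp * Km) = (Kmi * Kpi) ^ 2 * (Kp * Km) := by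
    rw [map_mul, hTKp, hTKm, hKpiKmi.eq, sq, mul_assoc, huKK, mul_one]
  exact ⟨hTC, map_cheb T (hKKC.inverse_left hKKu huKK)
    ((Commute.refl _).inverse_left hKKu huKK) hTC hTKK⟩
end
end

section
/- Double smash product: with C, H and the two commuting actions ⊳, ⊳̃ as in the context, the k-module D := C ⊗ H equipped with the multiplication determined k-bilinearly by (c ⊗ h)·(c' ⊗ h') := c·(h⁽¹⁾ ⊳ (h⁽³⁾ ⊳̃ c')) ⊗ h⁽²⁾h' is an associative unital algebra with unit 1 ⊗ 1; moreover the maps c ↦ c ⊗ 1 and h ↦ 1 ⊗ h are injective algebra homomorphisms C → D and H → D, and (c ⊗ 1)·(1 ⊗ h) = c ⊗ h. -/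
/-!
Let `E c` and `T h` be left multiplication by `c ⊗ 1` and by `1 ⊗ h` on `C ⊗ H`, so that the
product is `c ⊗ h ↦ E c * T h`. Both are algebra maps into `End (C ⊗ H)`:
`T h = Σ σ(h⁽¹⁾ ⊗ h⁽³⁾) ⊗ (h⁽²⁾ · -)`, where `σ(a ⊗ b) = (a ⊳ -) ∘ (b ⊳̃ -)` is multiplicative
on `H ⊗ H` because the actions commute, and `h ↦ (h⁽¹⁾ ⊗ h⁽³⁾) ⊗ h⁽²⁾` is multiplicative because
`H` is a bialgebra. Associativity then reduces to the commutation relation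
`T h * E c = Σ E (h⁽¹⁾ ⊳ h⁽³⁾ ⊳̃ c) * T h⁽²⁾`, which follows from the module-algebra axioms and
the coassociativity identity `(id ⊗ comul₁₃₂) ∘ comul₁₃₂ = assoc ∘ (Δ_{H ⊗ Hᶜᵒᵖ} ⊗ id) ∘ comul₁₃₂`,
both sides being `h ↦ (h⁽¹⁾ ⊗ h⁽⁵⁾) ⊗ ((h⁽²⁾ ⊗ h⁽⁴⁾) ⊗ h⁽³⁾)`.
-/

open TensorProduct

noncomputable section

/-- Given two `End`-valued linear maps `act, actT` on `H`, the map
`H ⊗ H → End(C)`, `h₁ ⊗ h₃ ↦ (act h₁) ∘ (actT h₃)`. -/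
def sandwich {k H C : Type*} [CommSemiring k] [AddCommMonoid H] [Module k H]
    [AddCommMonoid C] [Module k C]
    (act actT : H →ₗ[k] Module.End k C) : H ⊗[k] H →ₗ[k] Module.End k C :=
  (LinearMap.mul' k (Module.End k C)) ∘ₗ TensorProduct.map act actT

/-- The rearrangement `(h₁ ⊗ h₂) ⊗ h₃ ↦ (h₁ ⊗ h₃) ⊗ h₂`. -/
def rearr (k H : Type*) [CommSemiring k] [AddCommMonoid H] [Module k H] :
    ((H ⊗[k] H) ⊗[k] H) →ₗ[k] ((H ⊗[k] H) ⊗[k] H) :=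
  (TensorProduct.assoc k H H H).symm.toLinearMap ∘ₗ
    (LinearMap.lTensor H (TensorProduct.comm k H H).toLinearMap) ∘ₗ
    (TensorProduct.assoc k H H H).toLinearMap

/-- For `f, g : X → End(Y)`, the map `X ⊗ X → End(Y ⊗ Y)`, `x ⊗ x' ↦ (f x) ⊗ (g x')`;
used to express module-algebra (measuring) conditions in Sweedler-free form. -/
def pairEndo {k X Y : Type*} [CommSemiring k] [AddCommMonoid X] [Module k X]
    [AddCommMonoid Y] [Module k Y]
    (f g : X →ₗ[k] Module.End k Y) : X ⊗[k] X →ₗ[k] (Y ⊗[k] Y →ₗ[k] Y ⊗[k] Y) :=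
  (TensorProduct.homTensorHomMap (RingHom.id k) Y Y Y Y) ∘ₗ TensorProduct.map f g

namespace DoubleSmash

section Coalgebra

variable (k H : Type*) [CommSemiring k] [Semiring H] [Bialgebra k H]

/-- `h ↦ (h⁽¹⁾ ⊗ h⁽³⁾) ⊗ h⁽²⁾`, assembled from algebra maps so that it is multiplicative. -/
def comul₁₃₂ : H →ₐ[k] (H ⊗[k] H) ⊗[k] H :=
  ((Algebra.TensorProduct.assoc k k k H H H).symm.toAlgHom.comp
    ((Algebra.TensorProduct.map (AlgHom.id k H) (Algebra.TensorProduct.comm k H H).toAlgHom).comp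
      (Algebra.TensorProduct.assoc k k k H H H).toAlgHom)).comp
    ((Algebra.TensorProduct.map (Bialgebra.comulAlgHom k H) (AlgHom.id k H)).comp
      (Bialgebra.comulAlgHom k H))

/-- The comultiplication of `H ⊗ Hᶜᵒᵖ`: `a ⊗ b ↦ (a⁽¹⁾ ⊗ b⁽²⁾) ⊗ (a⁽²⁾ ⊗ b⁽¹⁾)`. -/
def comulTensorCop : H ⊗[k] H →ₗ[k] (H ⊗[k] H) ⊗[k] (H ⊗[k] H) :=
  (tensorTensorTensorComm k H H H H).toLinearMap ∘ₗ
    map (Coalgebra.comul (R := k)) ((TensorProduct.comm k H H).toLinearMap ∘ₗ Coalgebra.comul)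

variable {k H}

theorem rearr_eq_rightComm : rearr k H = (rightComm k H H H).toLinearMap := by
  ext; rfl

theorem comul₁₃₂_toLinearMap :
    (comul₁₃₂ k H).toLinearMap = (rightComm k H H H).toLinearMap ∘ₗ
      (Coalgebra.comul (R := k)).rTensor H ∘ₗ Coalgebra.comul := by
  have hδ : (Bialgebra.comulAlgHom k H).toLinearMap = Coalgebra.comul := rfl
  simp only [comul₁₃₂, AlgHom.comp_toLinearMap, hδ, ← LinearMap.comp_assoc]
  congr 2
  ext
  rfl

theorem comul₁₃₂_apply (h : H) :
    comul₁₃₂ k H h = rearr k H ((Coalgebra.comul (R := k)).rTensor H (Coalgebra.comul h)) := by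
  rw [rearr_eq_rightComm, ← AlgHom.toLinearMap_apply, comul₁₃₂_toLinearMap]
  rfl

theorem map_id_comul₁₃₂_comp_comul₁₃₂ :
    map LinearMap.id (comul₁₃₂ k H).toLinearMap ∘ₗ (comul₁₃₂ k H).toLinearMap =
      (TensorProduct.assoc k _ _ _).toLinearMap ∘ₗ map (comulTensorCop k H) LinearMap.id ∘ₗ
        (comul₁₃₂ k H).toLinearMap := by
  calc _ = (map LinearMap.id (rightComm k H H H).toLinearMap ∘ₗ (rightComm k _ _ _).toLinearMap ∘ₗ
          map ((TensorProduct.assoc k _ _ _).toLinearMap ∘ₗ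
            map (TensorProduct.assoc k _ _ _).toLinearMap LinearMap.id) LinearMap.id ∘ₗ
          (TensorProduct.assoc k _ _ _).symm.toLinearMap) ∘ₗ
        map (map Coalgebra.comul LinearMap.id) Coalgebra.comul ∘ₗ
          (Coalgebra.comul (R := k)).rTensor H ∘ₗ Coalgebra.comul := by
        simp only [comul₁₃₂_toLinearMap, coassoc_simps]
    _ = ((TensorProduct.assoc k _ _ _).toLinearMap ∘ₗ
          map ((tensorTensorTensorComm k H H H H).toLinearMap ∘ₗ
            map LinearMap.id (TensorProduct.comm k H H).toLinearMap) LinearMap.id ∘ₗ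
          (rightComm k _ _ _).toLinearMap) ∘ₗ
        map (map Coalgebra.comul LinearMap.id) Coalgebra.comul ∘ₗ
          (Coalgebra.comul (R := k)).rTensor H ∘ₗ Coalgebra.comul := by
        congr 1
        ext
        rfl
    _ = _ := by
        simp only [comul₁₃₂_toLinearMap, comulTensorCop, coassoc_simps]

theorem map_counit_comp_comul₁₃₂ :
    map (Coalgebra.counit (R := k) (A := H ⊗[k] H)) LinearMap.id ∘ₗ (comul₁₃₂ k H).toLinearMap =
      (TensorProduct.lid k H).symm.toLinearMap := by
  calc _ = map (TensorProduct.lid k k).toLinearMap LinearMap.id ∘ₗ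
        (TensorProduct.assoc k _ _ _).symm.toLinearMap ∘ₗ
        map (Coalgebra.counit (R := k)) ((TensorProduct.comm k _ _).toLinearMap ∘ₗ
          (Coalgebra.counit (R := k)).lTensor H ∘ₗ Coalgebra.comul) ∘ₗ Coalgebra.comul := by
        simp only [comul₁₃₂_toLinearMap, TensorProduct.counit_def,
          AlgebraTensorModule.rid_eq_rid, ← TensorProduct.lid_eq_rid, coassoc_simps]
    _ = map (TensorProduct.lid k k).toLinearMap LinearMap.id ∘ₗ
        (TensorProduct.assoc k _ _ _).symm.toLinearMap ∘ₗ
        map (Coalgebra.counit (R := k)) (TensorProduct.lid k H).symm.toLinearMap ∘ₗ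
          Coalgebra.comul := by
        rw [Coalgebra.lTensor_counit_comp_comul]
        rfl
    _ = _ := by
        rw [CoassocSimps.map_counit_comp_comul_left]
        ext
        simp

end Coalgebra

section SmashProduct

variable {k H C : Type*} [CommSemiring k] [Semiring H] [Bialgebra k H] [Semiring C] [Algebra k C]

/-- `σ t (x * y) = σ t⁽¹⁾ x * σ t⁽²⁾ y` for the comultiplication of `H ⊗ Hᶜᵒᵖ`. -/
def MeasuresTensorCop (σ : H ⊗[k] H →ₗ[k] Module.End k C) : Prop :=
  ∀ x y : C, LinearMap.applyₗ (x * y) ∘ₗ σ =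
    LinearMap.mul' k C ∘ₗ map (LinearMap.applyₗ x ∘ₗ σ) (LinearMap.applyₗ y ∘ₗ σ) ∘ₗ
      comulTensorCop k H

variable (k H) in
def lmulC : C →ₐ[k] Module.End k (C ⊗[k] H) :=
  (Module.End.rTensorAlgHom k C H).comp (Algebra.lmul k C)

def lmulH (σ : H ⊗[k] H →ₐ[k] Module.End k C) : H →ₐ[k] Module.End k (C ⊗[k] H) :=
  Module.endTensorEndAlgHom.comp
    ((Algebra.TensorProduct.map σ (Algebra.lmul k H)).comp (comul₁₃₂ k H))

def smashMul (σ : H ⊗[k] H →ₐ[k] Module.End k C) :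
    C ⊗[k] H →ₗ[k] Module.End k (C ⊗[k] H) :=
  LinearMap.mul' k _ ∘ₗ map (lmulC k H).toLinearMap (lmulH σ).toLinearMap

variable (σ : H ⊗[k] H →ₐ[k] Module.End k C)

@[simp]
theorem lmulC_tmul (c c' : C) (h : H) : lmulC k H c (c' ⊗ₜ h) = (c * c') ⊗ₜ h :=
  rfl

theorem lmulH_tmul (h h' : H) (c : C) :
    lmulH σ h (c ⊗ₜ h') =
      map (LinearMap.applyₗ c ∘ₗ σ.toLinearMap) (LinearMap.mulRight k h') (comul₁₃₂ k H h) := by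
  simp only [lmulH, AlgHom.comp_apply]
  induction comul₁₃₂ k H h with
  | zero => simp
  | add x y hx hy => simp only [map_add, LinearMap.add_apply, hx, hy]
  | tmul u g => simp [Module.endTensorEndAlgHom_apply]

@[simp]
theorem smashMul_tmul (c : C) (h : H) : smashMul σ (c ⊗ₜ h) = lmulC k H c * lmulH σ h :=
  rfl

theorem smashMul_tmul_apply_tmul (c c' : C) (h h' : H) :
    smashMul σ (c ⊗ₜ h) (c' ⊗ₜ h') =
      map (LinearMap.mulLeft k c ∘ₗ LinearMap.applyₗ c') (LinearMap.mulRight k h')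
        (map σ.toLinearMap LinearMap.id (comul₁₃₂ k H h)) := by
  rw [smashMul_tmul, Module.End.mul_apply, lmulH_tmul, ← LinearMap.comp_apply (map _ _),
    ← map_comp, LinearMap.comp_id]
  exact LinearMap.congr_fun (LinearMap.rTensor_comp_map _ _ _ _) _

theorem lmulH_comp_lTensor_mulRight (h h' : H) :
    lmulH σ h ∘ₗ (LinearMap.mulRight k h').lTensor C =
      (LinearMap.mulRight k h').lTensor C ∘ₗ lmulH σ h := by
  ext c g
  simp only [AlgebraTensorModule.curry_apply, curry_apply, LinearMap.coe_restrictScalars,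
    LinearMap.comp_apply, LinearMap.lTensor_tmul, LinearMap.mulRight_apply, lmulH_tmul,
    LinearMap.mulRight_mul, ← LinearMap.lTensor_comp_map]

theorem smashMul_lTensor_mulRight (h : H) (x : C ⊗[k] H) :
    smashMul σ ((LinearMap.mulRight k h).lTensor C x) = smashMul σ x * lmulH σ h := by
  induction x with
  | zero => simp
  | add x y hx hy => simp only [map_add, hx, hy, add_mul]
  | tmul c g => simp [mul_assoc]

theorem smashMul_lmulC (c : C) (x : C ⊗[k] H) :
    smashMul σ (lmulC k H c x) = lmulC k H c * smashMul σ x := by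
  induction x with
  | zero => simp
  | add x y hx hy => simp only [map_add, hx, hy, mul_add]
  | tmul c' g => simp [mul_assoc]

theorem lmulH_mul_lmulC (hσ : MeasuresTensorCop σ.toLinearMap) (h : H) (c : C) :
    lmulH σ h * lmulC k H c = smashMul σ (lmulH σ h (c ⊗ₜ 1)) := by
  refine TensorProduct.ext' fun c'' h'' => ?_
  -- Both sides are `P` applied to the two sides of `map_id_comul₁₃₂_comp_comul₁₃₂`.
  set f := LinearMap.applyₗ c ∘ₗ σ.toLinearMap
  set g := LinearMap.applyₗ c'' ∘ₗ σ.toLinearMap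
  set P := (LinearMap.mul' k C).rTensor H ∘ₗ (TensorProduct.assoc k C C H).symm.toLinearMap ∘ₗ
    map f (map g (LinearMap.mulRight k h''))
  have lhs : (lmulH σ h * lmulC k H c) (c'' ⊗ₜ h'') =
      (P ∘ₗ (TensorProduct.assoc k _ _ _).toLinearMap ∘ₗ map (comulTensorCop k H) LinearMap.id ∘ₗ
        (comul₁₃₂ k H).toLinearMap) h := by
    have hP : P ∘ₗ (TensorProduct.assoc k _ _ _).toLinearMap =
        map (LinearMap.mul' k C ∘ₗ map f g) (LinearMap.mulRight k h'') := by
      ext; simp [P, f, g]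
    rw [Module.End.mul_apply, lmulC_tmul, lmulH_tmul, hσ]
    calc map (LinearMap.mul' k C ∘ₗ map f g ∘ₗ comulTensorCop k H) (LinearMap.mulRight k h'')
          (comul₁₃₂ k H h)
        = map (LinearMap.mul' k C ∘ₗ map f g) (LinearMap.mulRight k h'')
            (map (comulTensorCop k H) LinearMap.id (comul₁₃₂ k H h)) := by
          rw [← LinearMap.comp_apply, ← map_comp, LinearMap.comp_id, LinearMap.comp_assoc]
      _ = _ := by rw [← hP]; rfl
  have rhs : smashMul σ (lmulH σ h (c ⊗ₜ 1)) (c'' ⊗ₜ h'') =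
      (P ∘ₗ map LinearMap.id (comul₁₃₂ k H).toLinearMap ∘ₗ (comul₁₃₂ k H).toLinearMap) h := by
    have hP : LinearMap.applyₗ (c'' ⊗ₜ[k] h'') ∘ₗ smashMul σ ∘ₗ map f (LinearMap.mulRight k 1) =
        P ∘ₗ map LinearMap.id (comul₁₃₂ k H).toLinearMap := by
      ext a b g₀
      simp only [AlgebraTensorModule.curry_apply, curry_apply, LinearMap.coe_restrictScalars,
        LinearMap.comp_apply, map_tmul, LinearMap.applyₗ_apply_apply, smashMul_tmul,
        Module.End.mul_apply, LinearMap.mulRight_apply, mul_one, lmulH_tmul,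
        AlgHom.toLinearMap_apply, LinearMap.id_apply, P]
      induction comul₁₃₂ k H g₀ with
      | zero => simp
      | add x y hx hy => simp only [map_add, tmul_add, hx, hy]
      | tmul v g₁ => simp [g]
    rw [lmulH_tmul, ← LinearMap.comp_assoc, ← hP]
    rfl
  rw [lhs, rhs, map_id_comul₁₃₂_comp_comul₁₃₂]

theorem smashMul_lmulH (hσ : MeasuresTensorCop σ.toLinearMap) (h : H) (x : C ⊗[k] H) :
    smashMul σ (lmulH σ h x) = lmulH σ h * smashMul σ x := by
  induction x with
  | zero => simp
  | add x y hx hy => simp only [map_add, hx, hy, mul_add]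
  | tmul c h' =>
    have hc : c ⊗ₜ[k] h' = (LinearMap.mulRight k h').lTensor C (c ⊗ₜ 1) := by simp
    rw [hc, ← LinearMap.comp_apply (lmulH σ h), lmulH_comp_lTensor_mulRight, LinearMap.comp_apply,
      smashMul_lTensor_mulRight, smashMul_lTensor_mulRight, ← lmulH_mul_lmulC σ hσ, smashMul_tmul,
      map_one, mul_one, mul_assoc]

theorem smashMul_smashMul (hσ : MeasuresTensorCop σ.toLinearMap) (x y : C ⊗[k] H) :
    smashMul σ (smashMul σ x y) = smashMul σ x * smashMul σ y := by
  induction x with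
  | zero => simp
  | add x x' hx hx' => simp only [map_add, LinearMap.add_apply, hx, hx', add_mul]
  | tmul c h =>
    rw [smashMul_tmul, Module.End.mul_apply, smashMul_lmulC, smashMul_lmulH σ hσ, mul_assoc]

theorem lmulH_apply_one_tmul_one
    (hσ : LinearMap.applyₗ 1 ∘ₗ σ.toLinearMap = Algebra.linearMap k C ∘ₗ Coalgebra.counit)
    (h : H) :
    lmulH σ h (1 ⊗ₜ 1) = 1 ⊗ₜ h := by
  rw [lmulH_tmul, hσ, LinearMap.mulRight_one, ← LinearMap.comp_id LinearMap.id, map_comp,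
    LinearMap.comp_apply, ← AlgHom.toLinearMap_apply,
    ← LinearMap.comp_apply _ (comul₁₃₂ k H).toLinearMap, map_counit_comp_comul₁₃₂]
  simp

theorem smashMul_apply_one_tmul_one
    (hσ : LinearMap.applyₗ 1 ∘ₗ σ.toLinearMap = Algebra.linearMap k C ∘ₗ Coalgebra.counit)
    (x : C ⊗[k] H) :
    smashMul σ x (1 ⊗ₜ 1) = x := by
  induction x with
  | zero => simp
  | add x y hx hy => simp only [map_add, LinearMap.add_apply, hx, hy]
  | tmul c h => simp [lmulH_apply_one_tmul_one σ hσ]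

theorem smashMul_one_tmul_apply_one_tmul
    (hσ : LinearMap.applyₗ 1 ∘ₗ σ.toLinearMap = Algebra.linearMap k C ∘ₗ Coalgebra.counit)
    (h h' : H) :
    smashMul σ (1 ⊗ₜ h) (1 ⊗ₜ h') = (1 : C) ⊗ₜ (h * h') := by
  have h1 : (1 : C) ⊗ₜ[k] h' = (LinearMap.mulRight k h').lTensor C (1 ⊗ₜ 1) := by simp
  rw [smashMul_tmul, map_one, one_mul, h1, ← LinearMap.comp_apply (lmulH σ h),
    lmulH_comp_lTensor_mulRight, LinearMap.comp_apply, lmulH_apply_one_tmul_one σ hσ]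
  simp

end SmashProduct

section Sandwich

variable {k H C : Type*} [CommSemiring k] [Semiring H] [Bialgebra k H] [Semiring C] [Algebra k C]

theorem pairEndo_apply_tmul {X Y : Type*} [AddCommMonoid X] [Module k X] [AddCommMonoid Y]
    [Module k Y] (f g : X →ₗ[k] Module.End k Y) (t : X ⊗[k] X) (x y : Y) :
    pairEndo f g t (x ⊗ₜ y) =
      map (LinearMap.applyₗ x ∘ₗ f) (LinearMap.applyₗ y ∘ₗ g) t := by
  induction t with
  | zero => simp
  | add t t' ht ht' => simp only [map_add, LinearMap.add_apply, ht, ht']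
  | tmul a b => simp [pairEndo]

theorem toLinearMap_lift_eq_sandwich (f g : H →ₐ[k] Module.End k C)
    (hfg : ∀ a b, Commute (f a) (g b)) :
    (Algebra.TensorProduct.lift f g hfg).toLinearMap = sandwich f.toLinearMap g.toLinearMap := by
  ext
  simp [sandwich]

variable (act actT : H →ₗ[k] Module.End k C)

theorem measuresTensorCop_sandwich
    (hact_alg : ∀ (h : H) (c c' : C), act h (c * c') =
      LinearMap.mul' k C ((pairEndo act act) (Coalgebra.comul (R := k) h) (c ⊗ₜ[k] c')))
    (hactT_alg : ∀ (h : H) (c c' : C), actT h (c * c') =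
      LinearMap.mul' k C ((pairEndo actT actT)
        ((TensorProduct.comm k H H) (Coalgebra.comul (R := k) h)) (c ⊗ₜ[k] c'))) :
    MeasuresTensorCop (sandwich act actT) := by
  intro x y
  refine TensorProduct.ext' fun a b => ?_
  simp only [LinearMap.comp_apply, LinearMap.applyₗ_apply_apply, sandwich, map_tmul,
    LinearMap.mul'_apply, Module.End.mul_apply, comulTensorCop, LinearEquiv.coe_coe,
    hactT_alg, pairEndo_apply_tmul]
  induction TensorProduct.comm k H H (Coalgebra.comul b) with
  | zero => simp
  | add s s' hs hs' => simp only [map_add, tmul_add, hs, hs']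
  | tmul b₁ b₂ =>
    simp only [map_tmul, LinearMap.comp_apply, LinearMap.applyₗ_apply_apply, LinearMap.mul'_apply,
      hact_alg, pairEndo_apply_tmul]
    induction Coalgebra.comul (R := k) a with
    | zero => simp
    | add r r' hr hr' => simp only [map_add, add_tmul, hr, hr']
    | tmul a₁ a₂ => simp

theorem applyₗ_one_comp_sandwich
    (hact_unit : ∀ h : H, act h 1 = (Coalgebra.counit (R := k) h) • (1 : C))
    (hactT_unit : ∀ h : H, actT h 1 = (Coalgebra.counit (R := k) h) • (1 : C)) :
    LinearMap.applyₗ 1 ∘ₗ sandwich act actT = Algebra.linearMap k C ∘ₗ Coalgebra.counit := by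
  refine TensorProduct.ext' fun a b => ?_
  simp [sandwich, hactT_unit, hact_unit, smul_smul, Algebra.algebraMap_eq_smul_one, mul_comm]

end Sandwich

end DoubleSmash

/-- double smash product: given a bialgebra `H` over a field `k`, an algebra
`C` which is simultaneously a left `H`-module algebra (for `⊳ = act`) and a left
`H^{cop}`-module algebra (for `⊳̃ = actT`), with the two actions commuting, the `k`-module
`D = C ⊗ H` with multiplication determined bilinearly by
`(c ⊗ h)·(c' ⊗ h') = c·(h⁽¹⁾ ⊳ (h⁽³⁾ ⊳̃ c')) ⊗ h⁽²⁾h'`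
is an associative unital algebra with unit `1 ⊗ 1`; the maps `c ↦ c ⊗ 1` and `h ↦ 1 ⊗ h` are
injective algebra homomorphisms, and `(c ⊗ 1)·(1 ⊗ h) = c ⊗ h`. -/
theorem statement14 {k : Type*} [Field k]
    {H : Type*} [Ring H] [Bialgebra k H]
    {C : Type*} [Ring C] [Algebra k C] [Nontrivial C]
    (act actT : H →ₗ[k] Module.End k C)
    (hact_one : act 1 = LinearMap.id)
    (hact_mulH : ∀ g h : H, act (g * h) = (act g) ∘ₗ (act h))
    (hactT_one : actT 1 = LinearMap.id)
    (hactT_mulH : ∀ g h : H, actT (g * h) = (actT g) ∘ₗ (actT h))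
    (hact_alg : ∀ (h : H) (c c' : C), act h (c * c') =
      LinearMap.mul' k C ((pairEndo act act) (Coalgebra.comul (R := k) h) (c ⊗ₜ[k] c')))
    (hact_unit : ∀ h : H, act h 1 = (Coalgebra.counit (R := k) h) • (1 : C))
    (hactT_alg : ∀ (h : H) (c c' : C), actT h (c * c') =
      LinearMap.mul' k C ((pairEndo actT actT)
        ((TensorProduct.comm k H H) (Coalgebra.comul (R := k) h)) (c ⊗ₜ[k] c')))
    (hactT_unit : ∀ h : H, actT h 1 = (Coalgebra.counit (R := k) h) • (1 : C))
    (hcomm : ∀ (g h : H) (c : C), act g (actT h c) = actT h (act g c)) :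
    ∃ mult : (C ⊗[k] H) →ₗ[k] (C ⊗[k] H) →ₗ[k] (C ⊗[k] H),
      (∀ (c c' : C) (h h' : H),
        mult (c ⊗ₜ h) (c' ⊗ₜ h') =
          TensorProduct.map ((LinearMap.mulLeft k c) ∘ₗ (LinearMap.applyₗ c'))
              (LinearMap.mulRight k h')
            (TensorProduct.map (sandwich act actT) LinearMap.id
              (rearr k H ((LinearMap.rTensor H (Coalgebra.comul (R := k)))
                (Coalgebra.comul (R := k) h))))) ∧
      (∀ x y z : C ⊗[k] H, mult (mult x y) z = mult x (mult y z)) ∧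
      (∀ x : C ⊗[k] H, mult ((1 : C) ⊗ₜ (1 : H)) x = x) ∧
      (∀ x : C ⊗[k] H, mult x ((1 : C) ⊗ₜ (1 : H)) = x) ∧
      (∀ c c' : C, mult (c ⊗ₜ (1 : H)) (c' ⊗ₜ (1 : H)) = (c * c') ⊗ₜ (1 : H)) ∧
      (∀ h h' : H, mult ((1 : C) ⊗ₜ h) ((1 : C) ⊗ₜ h') = (1 : C) ⊗ₜ (h * h')) ∧
      (∀ (c : C) (h : H), mult (c ⊗ₜ (1 : H)) ((1 : C) ⊗ₜ h) = c ⊗ₜ h) ∧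
      Function.Injective (fun c : C => (c ⊗ₜ[k] (1 : H) : C ⊗[k] H)) ∧
      Function.Injective (fun h : H => ((1 : C) ⊗ₜ[k] h : C ⊗[k] H)) := by
  set σ := Algebra.TensorProduct.lift (AlgHom.ofLinearMap act hact_one hact_mulH)
    (AlgHom.ofLinearMap actT hactT_one hactT_mulH) fun g h => LinearMap.ext (hcomm g h)
  have hσ : σ.toLinearMap = sandwich act actT := DoubleSmash.toLinearMap_lift_eq_sandwich _ _ _
  have hσ_mul := DoubleSmash.measuresTensorCop_sandwich act actT hact_alg hactT_alg
  have hσ_one := DoubleSmash.applyₗ_one_comp_sandwich act actT hact_unit hactT_unit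
  rw [← hσ] at hσ_mul hσ_one
  refine ⟨DoubleSmash.smashMul σ, fun c c' h h' => ?_, fun x y z => ?_, fun x => by simp,
    DoubleSmash.smashMul_apply_one_tmul_one σ hσ_one, fun c c' => by simp,
    DoubleSmash.smashMul_one_tmul_apply_one_tmul σ hσ_one, fun c h => by simp, ?_,
    Algebra.TensorProduct.includeRight_injective (algebraMap k C).injective⟩
  · rw [DoubleSmash.smashMul_tmul_apply_tmul, hσ, DoubleSmash.comul₁₃₂_apply]
  · rw [DoubleSmash.smashMul_smashMul σ hσ_mul]
    rfl
  · exact Function.LeftInverse.injective (g := fun x => TensorProduct.rid k C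
      ((Coalgebra.counit (R := k) (A := H)).lTensor C x)) fun c => by simp
end
end
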